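/- arXiv:cs/0309014 — 4 statements merged into one kernel-verified Lean document; each statement's English description precedes it below -/
import Mathlib

section
/- For every region P, the minimum size of a strip cover of P equals the maximum size of a rook placement in P. -/
/-- A pixel is a point of `ℤ × ℤ`. -/
abbrev Pixel : Type := ℤ × ℤ

/-- Two pixels are adjacent if their ℓ¹-distance is 1. -/
def Adjacent (p q : Pixel) : Prop := |p.1 - q.1| + |p.2 - q.2| = 1

/-- A cycle: a cyclic sequence of `k ≥ 2` pixels (encoded as a `k`-periodic
function on `ℤ`) in which consecutive pixels are adjacent. -/
structure GridCycle where
  k : ℕ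
  two_le : 2 ≤ k
  pts : ℤ → Pixel
  periodic : ∀ i : ℤ, pts (i + k) = pts i
  adj : ∀ i : ℤ, Adjacent (pts i) (pts (i + 1))

/-- The set of pixels covered by a cycle. -/
def GridCycle.covers (C : GridCycle) : Set Pixel := Set.range C.pts

/-- Turn cost at position `i`: 0 if the walk goes straight, 2 for a U-turn,
1 for a 90° turn. -/
def GridCycle.turnCost (C : GridCycle) (i : ℤ) : ℕ :=
  if C.pts (i + 1) - C.pts i = C.pts i - C.pts (i - 1) then 0
  else if C.pts (i + 1) - C.pts i = -(C.pts i - C.pts (i - 1)) then 2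
  else 1

/-- The number of turns of a cycle: total turn cost over all positions. -/
def GridCycle.turns (C : GridCycle) : ℕ :=
  ∑ i ∈ Finset.range C.k, C.turnCost (i : ℤ)

/-- A set of pixels is connected under adjacency. -/
def ConnectedIn (P : Set Pixel) : Prop :=
  ∀ p ∈ P, ∀ q ∈ P, Relation.ReflTransGen (fun a b => b ∈ P ∧ Adjacent a b) p q

/-- A region is a finite nonempty set of pixels connected under adjacency. -/
def IsRegion (P : Set Pixel) : Prop := P.Finite ∧ P.Nonempty ∧ ConnectedIn P

/-- A tour of `P`: a cycle whose pixels lie in `P` covering every pixel of `P`. -/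
def IsTour (P : Set Pixel) (C : GridCycle) : Prop := C.covers = P

/-- A cycle cover of `P`: a finite collection of cycles with pixels in `P`
covering every pixel of `P`. -/
def IsCycleCover (P : Set Pixel) (CC : List GridCycle) : Prop :=
  (∀ C ∈ CC, C.covers ⊆ P) ∧ ∀ p ∈ P, ∃ C ∈ CC, p ∈ C.covers

/-- The number of turns of a cycle cover. -/
def coverTurns (CC : List GridCycle) : ℕ := (CC.map GridCycle.turns).sum

/-- A horizontal strip of `P`: a maximal horizontal run of pixels of `P`. -/
def IsHStrip (P S : Set Pixel) : Prop :=
  ∃ x y : ℤ, ∃ ℓ : ℕ, S = {p : Pixel | p.2 = y ∧ x ≤ p.1 ∧ p.1 ≤ x + (ℓ : ℤ)} ∧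
    S ⊆ P ∧ (x - 1, y) ∉ P ∧ (x + (ℓ : ℤ) + 1, y) ∉ P

/-- A vertical strip of `P`: a maximal vertical run of pixels of `P`. -/
def IsVStrip (P S : Set Pixel) : Prop :=
  ∃ x y : ℤ, ∃ ℓ : ℕ, S = {p : Pixel | p.1 = x ∧ y ≤ p.2 ∧ p.2 ≤ y + (ℓ : ℤ)} ∧
    S ⊆ P ∧ (x, y - 1) ∉ P ∧ (x, y + (ℓ : ℤ) + 1) ∉ P

/-- A strip of `P` is a horizontal or vertical strip. -/
def IsStrip (P S : Set Pixel) : Prop := IsHStrip P S ∨ IsVStrip P S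

/-- A strip cover of `P`: a set of strips of `P` whose union is `P`. -/
def IsStripCover (P : Set Pixel) (F : Set (Set Pixel)) : Prop :=
  (∀ S ∈ F, IsStrip P S) ∧ ⋃₀ F = P

/-- The minimum size of a strip cover of `P`. -/
noncomputable def minStripCover (P : Set Pixel) : ℕ :=
  sInf {m | ∃ F, IsStripCover P F ∧ F.ncard = m}

/-- A rook placement in `P`: a subset of `P` no two distinct elements of which
lie in a common strip of `P`. -/
def IsRookPlacement (P R : Set Pixel) : Prop :=
  R ⊆ P ∧ ∀ p ∈ R, ∀ q ∈ R, p ≠ q → ¬∃ S, IsStrip P S ∧ p ∈ S ∧ q ∈ S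

/-- A maximal rook placement: every pixel of `P` lies in a common strip with
some element of `R`. -/
def IsMaximalRookPlacement (P R : Set Pixel) : Prop :=
  IsRookPlacement P R ∧ ∀ p ∈ P, ∃ r ∈ R, ∃ S, IsStrip P S ∧ p ∈ S ∧ r ∈ S

/-!
Every pixel of a finite `P` lies in exactly one horizontal and one vertical strip, so `P` is the
edge set of a bipartite multigraph on the strips. Rook placements are its matchings and strip
covers its vertex covers, so the claim is König's theorem. That in turn follows from Hall's
theorem once the strips on one side are padded with as many dummy vertices as the deficiency.
-/

open Finset Function

theorem csInf_eq_csSup_of_forall_le {α : Type*} [ConditionallyCompleteLattice α]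
    {A B : Set α} {a b : α} (hAB : ∀ a ∈ A, ∀ b ∈ B, b ≤ a) (ha : a ∈ A) (hb : b ∈ B)
    (hab : a ≤ b) :
    sInf A = sSup B := by
  have hleast : IsLeast A a := ⟨ha, fun a' ha' => hab.trans (hAB a' ha' b hb)⟩
  have hgreatest : IsGreatest B b := ⟨hb, fun b' hb' => (hAB a ha b' hb').trans hab⟩
  rw [hleast.csInf_eq, hgreatest.csSup_eq]
  exact le_antisymm hab (hAB a ha b hb)

section Konig

variable {α β γ ι : Type*}

theorem Finset.exists_injective_sum_fin_of_card_le_card_biUnion_add [DecidableEq β]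
    (t : ι → Finset β) (d : ℕ) (h : ∀ s : Finset ι, #s ≤ #(s.biUnion t) + d) :
    ∃ r : ι → β ⊕ Fin d, Injective r ∧ ∀ i b, r i = .inl b → b ∈ t i := by
  have hall : ∀ s : Finset ι,
      #s ≤ #(s.biUnion fun i => (t i).disjSum (univ : Finset (Fin d))) := by
    intro s
    obtain rfl | hs := s.eq_empty_or_nonempty
    · simp
    have hpad : s.biUnion (fun i => (t i).disjSum (univ : Finset (Fin d))) =
        (s.biUnion t).disjSum (univ : Finset (Fin d)) := by
      ext (b | c)
      · simp
      · simp only [mem_biUnion, inr_mem_disjSum, mem_univ, and_true, iff_true]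
        exact hs
    rw [hpad, card_disjSum, card_univ, Fintype.card_fin]
    exact h s
  obtain ⟨r, hr, hrt⟩ := (all_card_le_biUnion_card_iff_exists_injective _).1 hall
  exact ⟨r, hr, fun i b hb => by simpa [hb] using hrt i⟩

theorem Fintype.card_le_card_filter_isLeft_add [Fintype ι] {d : ℕ} {r : ι → β ⊕ Fin d}
    (hr : Injective r) : Fintype.card ι ≤ #{i | (r i).isLeft} + d := by
  classical
  have hright : #{i | ¬(r i).isLeft} ≤ d := by
    calc #{i | ¬(r i).isLeft} = #(({i | ¬(r i).isLeft} : Finset ι).image r) :=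
          (card_image_of_injective _ hr).symm
      _ ≤ #((univ : Finset (Fin d)).image Sum.inr) := by
          refine card_le_card fun x hx => ?_
          obtain ⟨i, hi, rfl⟩ := mem_image.1 hx
          cases hri : r i <;> simp_all
      _ = d := by rw [card_image_of_injective _ Sum.inr_injective, card_univ, Fintype.card_fin]
  rw [← card_univ, ← card_filter_add_card_filter_not (fun i => (r i).isLeft)]
  omega

variable [DecidableEq α] [DecidableEq β] (E : Finset γ) (f : γ → α) (g : γ → β)

def edgeNbhd (S : Finset α) : Finset β := {e ∈ E | f e ∈ S}.image g

theorem exists_matching_card_add_le (d : ℕ)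
    (h : ∀ S ⊆ E.image f, #S ≤ #(edgeNbhd E f g S) + d) :
    ∃ M ⊆ E, Set.InjOn f M ∧ Set.InjOn g M ∧ #(E.image f) ≤ #M + d := by
  classical
  rcases isEmpty_or_nonempty γ with hγ | hγ
  · exact ⟨∅, empty_subset _, by simp, by simp, by simp [eq_empty_of_isEmpty E]⟩
  obtain ⟨r, hr, hrt⟩ := exists_injective_sum_fin_of_card_le_card_biUnion_add
    (fun a : E.image f => edgeNbhd E f g {a.1}) d fun s => by
      have hunion : s.biUnion (fun a => edgeNbhd E f g {a.1}) =
          edgeNbhd E f g (s.map (Embedding.subtype _)) := by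
        ext b; simp [edgeNbhd]; aesop
      rw [hunion, ← card_map (Embedding.subtype _)]
      exact h _ fun a ha => by obtain ⟨a, -, rfl⟩ := mem_map.1 ha; exact a.2
  have hpick : ∀ a : E.image f, (r a).isLeft → ∃ e ∈ E, f e = a ∧ .inl (g e) = r a := by
    intro a ha
    obtain ⟨b, hb⟩ := Sum.isLeft_iff.1 ha
    obtain ⟨e, he, rfl⟩ := mem_image.1 (hrt a b hb)
    exact ⟨e, (mem_filter.1 he).1, mem_singleton.1 (mem_filter.1 he).2, hb.symm⟩
  choose! pick hpickE hpickf hpickg using hpick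
  set L : Finset (E.image f) := {a | (r a).isLeft}
  have hfL : Set.InjOn (f ∘ pick) L := fun a ha a' ha' h => by
    simp only [comp_apply, hpickf a (mem_filter.1 ha).2, hpickf a' (mem_filter.1 ha').2] at h
    exact Subtype.ext h
  have hgL : Set.InjOn (g ∘ pick) L := fun a ha a' ha' h => hr <| by
    rw [← hpickg a (mem_filter.1 ha).2, ← hpickg a' (mem_filter.1 ha').2]
    exact congrArg _ h
  refine ⟨L.image pick, fun e he => ?_, ?_, ?_, ?_⟩
  · obtain ⟨a, ha, rfl⟩ := mem_image.1 he
    exact hpickE a (mem_filter.1 ha).2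
  · rw [coe_image]; exact hfL.image_of_comp
  · rw [coe_image]; exact hgL.image_of_comp
  · rw [card_image_of_injOn hfL.of_comp, ← Fintype.card_coe]
    exact Fintype.card_le_card_filter_isLeft_add hr

/-- König's theorem for the bipartite multigraph with edge set `E`, where the edge `e` joins
`f e` to `g e`. -/
theorem exists_matching_cover_card_le :
    ∃ M ⊆ E, Set.InjOn f M ∧ Set.InjOn g M ∧ ∃ A ⊆ E.image f, ∃ B ⊆ E.image g,
      (∀ e ∈ E, f e ∈ A ∨ g e ∈ B) ∧ #A + #B ≤ #M := by
  classical
  -- For `S₀` of maximal deficiency, `(E.image f \ S₀) ∪ edgeNbhd E f g S₀` is a minimum cover.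
  obtain ⟨S₀, hS₀, hmax⟩ := exists_max_image (E.image f).powerset
    (fun S => (#S : ℤ) - #(edgeNbhd E f g S)) ⟨∅, empty_mem_powerset _⟩
  have hdeficiency : #(edgeNbhd E f g S₀) ≤ #S₀ := by
    simpa [edgeNbhd] using hmax ∅ (empty_mem_powerset _)
  obtain ⟨M, hME, hf, hg, hcard⟩ :=
    exists_matching_card_add_le E f g (#S₀ - #(edgeNbhd E f g S₀))
      fun S hS => by have := hmax S (mem_powerset.2 hS); omega
  refine ⟨M, hME, hf, hg, E.image f \ S₀, sdiff_subset, edgeNbhd E f g S₀,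
    image_subset_image (filter_subset _ _), fun e he => ?_, ?_⟩
  · by_cases hfe : f e ∈ S₀
    · exact .inr (mem_image_of_mem g (mem_filter.2 ⟨he, hfe⟩))
    · exact .inl (mem_sdiff.2 ⟨mem_image_of_mem f he, hfe⟩)
  · have := card_le_card (mem_powerset.1 hS₀)
    rw [card_sdiff_of_subset (mem_powerset.1 hS₀)]
    omega

end Konig

namespace Int

theorem exists_Icc_subset_of_finite {T : Set ℤ} (hT : T.Finite) {z : ℤ} (hz : z ∈ T) :
    ∃ a b, z ∈ Set.Icc a b ∧ Set.Icc a b ⊆ T ∧ a - 1 ∉ T ∧ b + 1 ∉ T := by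
  obtain ⟨m, hm⟩ := hT.bddBelow
  obtain ⟨m', hm'⟩ := hT.bddAbove
  set L := {w | w < z ∧ w ∉ T}
  set U := {w | z < w ∧ w ∉ T}
  have hLbdd : BddAbove L := ⟨z, fun w hw => hw.1.le⟩
  have hUbdd : BddBelow U := ⟨z, fun w hw => hw.1.le⟩
  have hL : sSup L ∈ L :=
    csSup_mem ⟨min m z - 1, by omega, fun h => by have := hm h; omega⟩ hLbdd
  have hU : sInf U ∈ U :=
    csInf_mem ⟨max m' z + 1, by omega, fun h => by have := hm' h; omega⟩ hUbdd
  obtain ⟨hLz, hLT⟩ := hL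
  obtain ⟨hUz, hUT⟩ := hU
  refine ⟨sSup L + 1, sInf U - 1, ⟨by omega, by omega⟩, fun w ⟨hw₁, hw₂⟩ => ?_,
    by simpa using hLT, by simpa using hUT⟩
  by_contra hwT
  rcases lt_trichotomy w z with h | rfl | h
  · have := le_csSup hLbdd ⟨h, hwT⟩; omega
  · exact hwT hz
  · have := csInf_le hUbdd ⟨h, hwT⟩; omega

theorem eq_of_Icc_subset_of_mem {T : Set ℤ} {a b a' b' z : ℤ}
    (h : Set.Icc a b ⊆ T) (ha : a - 1 ∉ T) (hb : b + 1 ∉ T)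
    (h' : Set.Icc a' b' ⊆ T) (ha' : a' - 1 ∉ T) (hb' : b' + 1 ∉ T)
    (hz : z ∈ Set.Icc a b) (hz' : z ∈ Set.Icc a' b') : a = a' ∧ b = b' := by
  obtain ⟨hz₁, hz₂⟩ := hz
  obtain ⟨hz₁', hz₂'⟩ := hz'
  have h₁ : ¬a < a' := fun hlt => ha' (h ⟨by omega, by omega⟩)
  have h₂ : ¬a' < a := fun hlt => ha (h' ⟨by omega, by omega⟩)
  have h₃ : ¬b < b' := fun hlt => hb (h' ⟨by omega, by omega⟩)
  have h₄ : ¬b' < b := fun hlt => hb' (h ⟨by omega, by omega⟩)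
  omega

end Int

section Strips

variable {P S S' : Set Pixel} {p : Pixel}

theorem isHStrip_of_Icc_subset {y a b : ℤ} (hab : a ≤ b)
    (hsub : ∀ x ∈ Set.Icc a b, (x, y) ∈ P) (ha : (a - 1, y) ∉ P) (hb : (b + 1, y) ∉ P) :
    IsHStrip P {p | p.2 = y ∧ a ≤ p.1 ∧ p.1 ≤ b} := by
  have hℓ : a + ((b - a).toNat : ℤ) = b := by omega
  refine ⟨a, y, (b - a).toNat, by rw [hℓ], ?_, ha, by rwa [hℓ]⟩
  rintro ⟨x, _⟩ ⟨rfl, hx⟩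
  exact hsub x hx

theorem exists_isHStrip_mem (hP : P.Finite) (hp : p ∈ P) : ∃ S, IsHStrip P S ∧ p ∈ S := by
  obtain ⟨a, b, hz, hsub, ha, hb⟩ := Int.exists_Icc_subset_of_finite
    (hP.preimage (Prod.mk_left_injective p.2).injOn) (z := p.1) hp
  exact ⟨_, isHStrip_of_Icc_subset (hz.1.trans hz.2) hsub ha hb, rfl, hz⟩

theorem IsHStrip.eq_of_mem (h : IsHStrip P S) (h' : IsHStrip P S') (hp : p ∈ S) (hp' : p ∈ S') :
    S = S' := by
  obtain ⟨x, y, ℓ, rfl, hsub, hl, hr⟩ := h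
  obtain ⟨x', y', ℓ', rfl, hsub', hl', hr'⟩ := h'
  obtain ⟨rfl, hp⟩ := hp
  obtain ⟨rfl, hp'⟩ := hp'
  obtain ⟨rfl, hend⟩ := Int.eq_of_Icc_subset_of_mem (T := {x | (x, p.2) ∈ P})
    (fun x hx => hsub ⟨rfl, hx⟩) hl hr (fun x hx => hsub' ⟨rfl, hx⟩) hl' hr' hp hp'
  simp only [hend]

theorem IsVStrip.isHStrip_swap (h : IsVStrip P S) :
    IsHStrip (Prod.swap ⁻¹' P) (Prod.swap ⁻¹' S) := by
  obtain ⟨x, y, ℓ, rfl, hsub, hl, hr⟩ := h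
  exact ⟨y, x, ℓ, rfl, Set.preimage_mono hsub, hl, hr⟩

theorem IsHStrip.isVStrip_swap (h : IsHStrip (Prod.swap ⁻¹' P) S) :
    IsVStrip P (Prod.swap ⁻¹' S) := by
  obtain ⟨x, y, ℓ, rfl, hsub, hl, hr⟩ := h
  exact ⟨y, x, ℓ, rfl, Set.preimage_mono hsub, hl, hr⟩

theorem exists_isVStrip_mem (hP : P.Finite) (hp : p ∈ P) : ∃ S, IsVStrip P S ∧ p ∈ S := by
  obtain ⟨S, hS, hpS⟩ := exists_isHStrip_mem (hP.preimage Prod.swap_injective.injOn)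
    (p := p.swap) hp
  exact ⟨_, hS.isVStrip_swap, hpS⟩

theorem IsVStrip.eq_of_mem (h : IsVStrip P S) (h' : IsVStrip P S') (hp : p ∈ S) (hp' : p ∈ S') :
    S = S' :=
  Set.preimage_injective.2 Prod.swap_surjective <|
    h.isHStrip_swap.eq_of_mem h'.isHStrip_swap (p := p.swap) hp hp'

theorem IsStrip.subset (h : IsStrip P S) : S ⊆ P := by
  rcases h with ⟨-, -, -, -, h, -⟩ | ⟨-, -, -, -, h, -⟩ <;> exact h

noncomputable def hStripAt (P : Set Pixel) (p : Pixel) : Set Pixel :=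
  Classical.epsilon fun S => IsHStrip P S ∧ p ∈ S

noncomputable def vStripAt (P : Set Pixel) (p : Pixel) : Set Pixel :=
  Classical.epsilon fun S => IsVStrip P S ∧ p ∈ S

theorem isHStrip_hStripAt (hP : P.Finite) (hp : p ∈ P) :
    IsHStrip P (hStripAt P p) ∧ p ∈ hStripAt P p :=
  Classical.epsilon_spec (exists_isHStrip_mem hP hp)

theorem isVStrip_vStripAt (hP : P.Finite) (hp : p ∈ P) :
    IsVStrip P (vStripAt P p) ∧ p ∈ vStripAt P p :=
  Classical.epsilon_spec (exists_isVStrip_mem hP hp)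

theorem IsHStrip.hStripAt_eq (h : IsHStrip P S) (hp : p ∈ S) : hStripAt P p = S :=
  have hS := Classical.epsilon_spec (p := fun S => IsHStrip P S ∧ p ∈ S) ⟨S, h, hp⟩
  hS.1.eq_of_mem h hS.2 hp

theorem IsVStrip.vStripAt_eq (h : IsVStrip P S) (hp : p ∈ S) : vStripAt P p = S :=
  have hS := Classical.epsilon_spec (p := fun S => IsVStrip P S ∧ p ∈ S) ⟨S, h, hp⟩
  hS.1.eq_of_mem h hS.2 hp

end Strips

section Duality

variable {P R : Set Pixel} {F : Set (Set Pixel)}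

theorem IsStripCover.finite (hF : IsStripCover P F) (hP : P.Finite) : F.Finite :=
  hP.finite_subsets.subset fun _ hS => hF.2 ▸ Set.subset_sUnion_of_mem hS

theorem IsRookPlacement.ncard_le (hR : IsRookPlacement P R) (hF : IsStripCover P F)
    (hFfin : F.Finite) : R.ncard ≤ F.ncard := by
  have hcov : ∀ r ∈ R, ∃ S ∈ F, r ∈ S := fun r hr => by
    rw [← Set.mem_sUnion, hF.2]; exact hR.1 hr
  choose! σ hσF hσ using hcov
  refine Set.ncard_le_ncard_of_injOn σ hσF (fun r hr r' hr' h => ?_) hFfin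
  by_contra hne
  exact hR.2 r hr r' hr' hne ⟨σ r, hF.1 _ (hσF r hr), hσ r hr, h ▸ hσ r' hr'⟩

theorem isRookPlacement_of_injOn (hRP : R ⊆ P) (hh : Set.InjOn (hStripAt P) R)
    (hv : Set.InjOn (vStripAt P) R) : IsRookPlacement P R := by
  refine ⟨hRP, fun p hp q hq hpq ⟨S, hS, hpS, hqS⟩ => hpq ?_⟩
  rcases hS with hS | hS
  · exact hh hp hq (by rw [hS.hStripAt_eq hpS, hS.hStripAt_eq hqS])
  · exact hv hp hq (by rw [hS.vStripAt_eq hpS, hS.vStripAt_eq hqS])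

theorem isStripCover_of_forall (hP : P.Finite) (hF : ∀ S ∈ F, IsStrip P S)
    (hcov : ∀ p ∈ P, hStripAt P p ∈ F ∨ vStripAt P p ∈ F) : IsStripCover P F := by
  refine ⟨hF, (Set.sUnion_subset fun S hS => (hF S hS).subset).antisymm fun p hp => ?_⟩
  rcases hcov p hp with h | h
  exacts [⟨_, h, (isHStrip_hStripAt hP hp).2⟩, ⟨_, h, (isVStrip_vStripAt hP hp).2⟩]

theorem exists_rookPlacement_stripCover_ncard_le (hP : P.Finite) :
    ∃ R F, IsRookPlacement P R ∧ IsStripCover P F ∧ F.ncard ≤ R.ncard := by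
  classical
  obtain ⟨M, hMP, hMh, hMv, A, hA, B, hB, hcov, hcard⟩ :=
    exists_matching_cover_card_le hP.toFinset (hStripAt P) (vStripAt P)
  refine ⟨M, ↑(A ∪ B),
    isRookPlacement_of_injOn (fun p hp => hP.mem_toFinset.1 (hMP hp)) hMh hMv,
    isStripCover_of_forall hP (fun S hS => ?_) fun p hp => ?_, ?_⟩
  · rcases mem_union.1 hS with hS | hS
    · obtain ⟨p, hp, rfl⟩ := mem_image.1 (hA hS)
      exact .inl (isHStrip_hStripAt hP (hP.mem_toFinset.1 hp)).1
    · obtain ⟨p, hp, rfl⟩ := mem_image.1 (hB hS)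
      exact .inr (isVStrip_vStripAt hP (hP.mem_toFinset.1 hp)).1
  · rcases hcov p (hP.mem_toFinset.2 hp) with h | h
    · exact .inl (mem_coe.2 (mem_union_left B h))
    · exact .inr (mem_coe.2 (mem_union_right A h))
  · rw [Set.ncard_coe_finset, Set.ncard_coe_finset]
    exact (card_union_le A B).trans hcard

end Duality

/-- Strip cover / rook placement duality: for every region `P`, the minimum
size of a strip cover of `P` equals the maximum size of a rook placement
in `P`. -/
theorem minStripCover_eq_maxRookPlacement (P : Set Pixel) (hP : IsRegion P) :
    minStripCover P = sSup {m | ∃ R : Set Pixel, IsRookPlacement P R ∧ R.ncard = m} := by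
  obtain ⟨R, F, hR, hF, hle⟩ := exists_rookPlacement_stripCover_ncard_le hP.1
  refine csInf_eq_csSup_of_forall_le ?_ ⟨F, hF, rfl⟩ ⟨R, hR, rfl⟩ hle
  rintro _ ⟨F', hF', rfl⟩ _ ⟨R', hR', rfl⟩
  exact hR'.ncard_le hF' (hF'.finite hP.1)
end

section
/- Let V be a finite set of even cardinality at least 2, and let w : V × V → ℝ≥0 be a symmetric weight function. Suppose a, b ∈ V are distinct, w(a, b) = 0, and for all x, y ∈ V one has w(x, y) ≤ w(x, a) + w(b, y) and w(x, y) ≤ w(x, b) + w(a, y). Then among the perfect matchings of V of minimum total weight there is one containing the pair {a, b}. -/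
/-!
Start from a matching `f` of minimum weight. If `f` pairs `a` with `a'` and `b` with `b'`, replace
these two pairs by `{a, b}` and `{a', b'}`. This is conjugation of `f` by the transposition
`(a' b)`, so the result is again a perfect matching, and its weight changes by
`2 (w a b + w a' b' - w a a' - w b b') ≤ 0`, since `w a' b' ≤ w a' a + w b b'`.
-/

open Equiv Finset

section

variable {α β : Type*}

/-- A perfect matching of `α`, encoded as the map sending each element to its partner. -/
def IsPerfectMatching (f : α → α) : Prop :=
  Function.Involutive f ∧ ∀ x, f x ≠ x

def matchingWeight [Fintype α] (w : α → α → ℝ) (f : α → α) : ℝ :=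
  ∑ x, w x (f x)

namespace IsPerfectMatching

variable {f : β → β}

theorem conj (hf : IsPerfectMatching f) (e : β ≃ α) : IsPerfectMatching (e ∘ f ∘ e.symm) :=
  ⟨fun x => by simp [hf.1 _], fun x h => hf.2 (e.symm x) (by simpa [eq_symm_apply] using h)⟩

theorem prodMap_not : IsPerfectMatching (Prod.map id not : β × Bool → β × Bool) :=
  ⟨fun x => by simp [Prod.map], fun x h => by simpa using congrArg Prod.snd h⟩

end IsPerfectMatching

theorem exists_isPerfectMatching_of_even_card [Fintype α] (h : Even (Fintype.card α)) :
    ∃ f : α → α, IsPerfectMatching f := by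
  obtain ⟨k, hk⟩ := h
  let e : Fin k × Bool ≃ α := Fintype.equivOfCardEq (by simp [hk, mul_two])
  exact ⟨_, IsPerfectMatching.prodMap_not.conj e⟩

theorem matchingWeight_le_of_eq_off [Fintype α] [DecidableEq α] {w : α → α → ℝ}
    {f g : α → α} (s : Finset α) (hoff : ∀ x ∉ s, g x = f x)
    (hs : ∑ x ∈ s, w x (g x) ≤ ∑ x ∈ s, w x (f x)) :
    matchingWeight w g ≤ matchingWeight w f := by
  have hcompl : ∑ x ∈ sᶜ, w x (g x) = ∑ x ∈ sᶜ, w x (f x) :=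
    sum_congr rfl fun x hx => by rw [hoff x (mem_compl.1 hx)]
  rw [matchingWeight, matchingWeight, ← sum_add_sum_compl s,
    ← sum_add_sum_compl s (fun x => w x (f x)), hcompl]
  exact add_le_add_left hs _

variable [DecidableEq α]

/-- Exchange the pairs `{a, f a}` and `{b, f b}` of `f` for `{a, b}` and `{f a, f b}`. -/
def rematch (f : α → α) (a b : α) : α → α :=
  swap (f a) b ∘ f ∘ swap (f a) b

variable {f : α → α} {a b : α}

theorem IsPerfectMatching.rematch (hf : IsPerfectMatching f) :
    IsPerfectMatching (rematch f a b) := by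
  simpa [_root_.rematch] using hf.conj (swap (f a) b)

theorem rematch_apply_self (hf : IsPerfectMatching f) (hab : a ≠ b) : rematch f a b a = b := by
  simp [rematch, swap_apply_of_ne_of_ne (hf.2 a).symm hab]

theorem rematch_apply_of_ne (hf : IsPerfectMatching f) {x : α} (hxa : x ≠ a) (hxb : x ≠ b)
    (hxfa : x ≠ f a) (hxfb : x ≠ f b) : rematch f a b x = f x := by
  have hfxfa : f x ≠ f a := hf.1.injective.ne hxa
  have hfxb : f x ≠ b := fun h => hxfb (by rw [← h, hf.1 x])
  rw [rematch, Function.comp_apply, Function.comp_apply,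
    swap_apply_of_ne_of_ne hxfa hxb, swap_apply_of_ne_of_ne hfxfa hfxb]

theorem matchingWeight_rematch_le [Fintype α] {w : α → α → ℝ}
    (hsymm : ∀ x y, w x y = w y x) (htri : ∀ x y, w x y ≤ w x a + w b y)
    (hwab : w a b = 0) (hab : a ≠ b) (hf : IsPerfectMatching f) :
    matchingWeight w (rematch f a b) ≤ matchingWeight w f := by
  by_cases hfa : f a = b
  · simp [rematch, hfa]
  refine matchingWeight_le_of_eq_off {a, b, f a, f b} (fun x hx => ?_) ?_
  · simp only [mem_insert, mem_singleton, not_or] at hx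
    exact rematch_apply_of_ne hf hx.1 hx.2.1 hx.2.2.1 hx.2.2.2
  have haa' : a ≠ f a := (hf.2 a).symm
  have hbb' : b ≠ f b := (hf.2 b).symm
  have hab' : a ≠ f b := fun h => hfa (by rw [h, hf.1 b])
  have ha'b' : f a ≠ f b := hf.1.injective.ne hab
  have ha : a ∉ ({b, f a, f b} : Finset α) := by simp [hab, haa', hab']
  have hb : b ∉ ({f a, f b} : Finset α) := by simp [hfa, Ne.symm, hbb']
  have hg : ∀ x, rematch f a b x = swap (f a) b (f (swap (f a) b x)) := fun _ => rfl
  simp only [sum_insert ha, sum_insert hb, sum_insert (by simpa : f a ∉ {f b}), sum_singleton, hg,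
    swap_apply_of_ne_of_ne haa' hab, swap_apply_left, swap_apply_right, hf.1 a, hf.1 b,
    swap_apply_of_ne_of_ne ha'b'.symm hbb'.symm]
  linarith [htri (f a) (f b), hsymm a b, hsymm (f a) (f b), hsymm a (f a), hsymm b (f b)]

end

theorem exists_min_matching_containing_zero_pair_general
    (α : Type) [Fintype α] [DecidableEq α]
    (heven : Even (Fintype.card α))
    (w : α → α → ℝ) (hsymm : ∀ x y, w x y = w y x)
    (a b : α) (hab : a ≠ b) (hwab : w a b = 0)
    (htri1 : ∀ x y, w x y ≤ w x a + w b y) :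
    ∃ f : α → α, (∀ x, f (f x) = x) ∧ (∀ x, f x ≠ x) ∧ f a = b ∧
      ∀ g : α → α, (∀ x, g (g x) = x) → (∀ x, g x ≠ x) →
        ∑ x, w x (f x) ≤ ∑ x, w x (g x) := by
  obtain ⟨f, hf, hmin⟩ := Set.exists_min_image {f | IsPerfectMatching f} (matchingWeight w)
    (Set.toFinite _) (exists_isPerfectMatching_of_even_card heven)
  refine ⟨rematch f a b, hf.rematch.1, hf.rematch.2, rematch_apply_self hf hab,
    fun g hg hg' => ?_⟩
  exact (matchingWeight_rematch_le hsymm htri1 hwab hab hf).trans (hmin g ⟨hg, hg'⟩)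

/-- Exchange lemma for minimum-weight perfect matchings: let `V` be a finite
set of even cardinality at least 2 (here, a finite type `α`), and let `w` be a
symmetric nonnegative weight function. If `a ≠ b`, `w a b = 0`, and
`w x y ≤ w x a + w b y` and `w x y ≤ w x b + w a y` for all `x, y`, then among
the perfect matchings of minimum total weight (perfect matchings encoded as
fixed-point-free involutions) there is one containing the pair `{a, b}`. -/
theorem exists_min_matching_containing_zero_pair
    (α : Type) [Fintype α] [DecidableEq α]
    (hcard : 2 ≤ Fintype.card α) (heven : Even (Fintype.card α))
    (w : α → α → ℝ) (hw0 : ∀ x y, 0 ≤ w x y) (hsymm : ∀ x y, w x y = w y x)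
    (a b : α) (hab : a ≠ b) (hwab : w a b = 0)
    (htri1 : ∀ x y, w x y ≤ w x a + w b y)
    (htri2 : ∀ x y, w x y ≤ w x b + w a y) :
    ∃ f : α → α, (∀ x, f (f x) = x) ∧ (∀ x, f x ≠ x) ∧ f a = b ∧
      ∀ g : α → α, (∀ x, g (g x) = x) → (∀ x, g x ≠ x) →
        ∑ x, w x (f x) ≤ ∑ x, w x (g x) :=
  exists_min_matching_containing_zero_pair_general α heven w hsymm a b hab hwab htri1
end

section
/- For every finite set V ⊆ ℤ × ℤ there exists a family (s_v)_{v ∈ V} of closed axis-parallel line segments of length 1 in ℝ² such that for all distinct u, v ∈ V, the segments s_u and s_v intersect if and only if u and v are at ℓ¹-distance 1. In other words, every grid graph is the intersection graph of a set of axis-parallel unit segments. -/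
/-!
Pass to the diagonal coordinates `a = p.1 + p.2`, `b = p.1 - p.2` of `p ∈ ℤ²`, which have equal
parity: the grid neighbours of `p` are exactly the points whose `a` and `b` both differ by `±1`.
A point with even `a` gets a horizontal unit segment centred near `(a / 4, b / 4)`, one with odd
`a` a vertical one. A horizontal and a vertical segment then cross iff both centre coordinates
differ by at most `1 / 2`, i.e. iff `|Δa| = |Δb| = 1`. Parallel segments on a common line would
overlap, so each is moved off its line by `δ` of its position along the line, where `δ` is
injective with `|δ| < 1 / 4` (e.g. `arctan / 8`): this separates parallel segments and is too
small to create or destroy a crossing.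
-/

open Set

theorem segment_add_one_zero (a : ℝ × ℝ) :
    segment ℝ a (a + (1, 0)) = Icc a.1 (a.1 + 1) ×ˢ {a.2} := by
  rw [prod_singleton, ← segment_eq_Icc (by linarith), Prod.image_mk_segment_left]
  congr 1; ext <;> simp

theorem segment_add_zero_one (a : ℝ × ℝ) :
    segment ℝ a (a + (0, 1)) = {a.1} ×ˢ Icc a.2 (a.2 + 1) := by
  rw [singleton_prod, ← segment_eq_Icc (by linarith), Prod.image_mk_segment_right]
  congr 1; ext <;> simp

theorem segment_add_one_zero_inter_segment_add_zero_one_nonempty_iff (a b : ℝ × ℝ) :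
    (segment ℝ a (a + (1, 0)) ∩ segment ℝ b (b + (0, 1))).Nonempty ↔
      b.1 ∈ Icc a.1 (a.1 + 1) ∧ a.2 ∈ Icc b.2 (b.2 + 1) := by
  rw [segment_add_one_zero, segment_add_zero_one, prod_inter_prod, prod_nonempty_iff,
    inter_singleton_nonempty, singleton_inter_nonempty]

theorem eq_of_div_four_add_eq {δ : ℤ → ℝ} (hδ : Function.Injective δ) (hδ_lt : ∀ n, |δ n| < 1 / 4)
    {m m' n n' : ℤ} (hm : Even (m - m')) (h : (m : ℝ) / 4 + δ n = m' / 4 + δ n') :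
    m = m' ∧ n = n' := by
  have hlt : |((m - m' : ℤ) : ℝ)| < 2 := by
    rw [abs_lt]; push_cast
    constructor <;> linarith [abs_lt.1 (hδ_lt n), abs_lt.1 (hδ_lt n')]
  obtain rfl : m = m' := by
    have : |m - m'| < 2 := by exact_mod_cast hlt
    obtain ⟨k, hk⟩ := hm
    rw [abs_lt] at this
    omega
  exact ⟨rfl, hδ (by linarith)⟩

theorem div_four_add_mem_Icc_iff {m m' : ℤ} (hm : Odd (m - m')) {e : ℝ} (he : |e| < 1 / 4) :
    (m : ℝ) / 4 + e ∈ Icc ((m' : ℝ) / 4 - 1 / 2) (m' / 4 - 1 / 2 + 1) ↔ |m - m'| = 1 := by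
  rw [abs_lt] at he
  rw [mem_Icc, abs_eq zero_le_one]
  constructor
  · rintro ⟨h₁, h₂⟩
    have hlt : |((m - m' : ℤ) : ℝ)| < 3 := by
      rw [abs_lt]; push_cast; constructor <;> linarith
    have : |m - m'| < 3 := by exact_mod_cast hlt
    obtain ⟨k, hk⟩ := hm
    rw [abs_lt] at this
    omega
  · intro h
    have : ((m - m' : ℤ) : ℝ) = 1 ∨ ((m - m' : ℤ) : ℝ) = -1 := by exact_mod_cast h
    push_cast at this
    rcases this with h | h <;> constructor <;> linarith

theorem Int.even_sub_iff_even_add (m n : ℤ) : Even (m - n) ↔ Even (m + n) := by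
  rw [Int.even_sub, Int.even_add]

theorem abs_sub_add_abs_sub_eq_one_iff (u v : ℤ × ℤ) :
    |u.1 - v.1| + |u.2 - v.2| = 1 ↔
      |(u.1 + u.2) - (v.1 + v.2)| = 1 ∧ |(u.1 - u.2) - (v.1 - v.2)| = 1 := by
  grind

theorem abs_sub_add_abs_sub_ne_one_of_even {u v : ℤ × ℤ} (h : Even ((u.1 + u.2) - (v.1 + v.2))) :
    |u.1 - v.1| + |u.2 - v.2| ≠ 1 := by
  rw [Ne, abs_sub_add_abs_sub_eq_one_iff, abs_eq zero_le_one]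
  obtain ⟨k, hk⟩ := h
  omega

noncomputable section GridSegment

variable (δ : ℤ → ℝ)

def horizontalStart (p : ℤ × ℤ) : ℝ × ℝ :=
  (((p.1 + p.2 : ℤ) : ℝ) / 4 - 1 / 2, ((p.1 - p.2 : ℤ) : ℝ) / 4 + δ (p.1 + p.2))

def verticalStart (p : ℤ × ℤ) : ℝ × ℝ :=
  (((p.1 + p.2 : ℤ) : ℝ) / 4 + δ (p.1 - p.2), ((p.1 - p.2 : ℤ) : ℝ) / 4 - 1 / 2)

def gridSegment (p : ℤ × ℤ) : Set (ℝ × ℝ) :=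
  if Even (p.1 + p.2) then segment ℝ (horizontalStart δ p) (horizontalStart δ p + (1, 0))
  else segment ℝ (verticalStart δ p) (verticalStart δ p + (0, 1))

variable {δ}

theorem gridSegment_of_even {p : ℤ × ℤ} (hp : Even (p.1 + p.2)) :
    gridSegment δ p = segment ℝ (horizontalStart δ p) (horizontalStart δ p + (1, 0)) :=
  if_pos hp

theorem gridSegment_of_not_even {p : ℤ × ℤ} (hp : ¬Even (p.1 + p.2)) :
    gridSegment δ p = segment ℝ (verticalStart δ p) (verticalStart δ p + (0, 1)) :=
  if_neg hp

theorem exists_gridSegment_eq (p : ℤ × ℤ) : ∃ a : ℝ × ℝ,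
    gridSegment δ p = segment ℝ a (a + (1, 0)) ∨ gridSegment δ p = segment ℝ a (a + (0, 1)) := by
  by_cases hp : Even (p.1 + p.2)
  · exact ⟨_, .inl (gridSegment_of_even hp)⟩
  · exact ⟨_, .inr (gridSegment_of_not_even hp)⟩

theorem gridSegment_inter_nonempty_iff_of_even_of_not_even (hδ_lt : ∀ n, |δ n| < 1 / 4)
    {u v : ℤ × ℤ} (hu : Even (u.1 + u.2)) (hv : ¬Even (v.1 + v.2)) :
    (gridSegment δ u ∩ gridSegment δ v).Nonempty ↔ |u.1 - v.1| + |u.2 - v.2| = 1 := by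
  have hu' : Even (u.1 - u.2) := (Int.even_sub_iff_even_add _ _).2 hu
  have hv' : Odd (v.1 - v.2) := by rwa [← Int.not_even_iff_odd, Int.even_sub_iff_even_add]
  rw [gridSegment_of_even hu, gridSegment_of_not_even hv,
    segment_add_one_zero_inter_segment_add_zero_one_nonempty_iff, horizontalStart, verticalStart,
    div_four_add_mem_Icc_iff ((Int.not_even_iff_odd.1 hv).sub_even hu) (hδ_lt _),
    div_four_add_mem_Icc_iff (hu'.sub_odd hv') (hδ_lt _), abs_sub_comm,
    abs_sub_add_abs_sub_eq_one_iff]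

theorem eq_of_gridSegment_inter_nonempty (hδ : Function.Injective δ)
    (hδ_lt : ∀ n, |δ n| < 1 / 4) {u v : ℤ × ℤ} (huv : Even (u.1 + u.2) ↔ Even (v.1 + v.2))
    (h : (gridSegment δ u ∩ gridSegment δ v).Nonempty) : u = v := by
  suffices u.1 + u.2 = v.1 + v.2 ∧ u.1 - u.2 = v.1 - v.2 from Prod.ext (by omega) (by omega)
  have ha : Even ((u.1 + u.2) - (v.1 + v.2)) := Int.even_sub.2 huv
  have hb : Even ((u.1 - u.2) - (v.1 - v.2)) := by
    rwa [Int.even_sub, Int.even_sub_iff_even_add, Int.even_sub_iff_even_add]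
  by_cases hu : Even (u.1 + u.2)
  · rw [gridSegment_of_even hu, gridSegment_of_even (huv.1 hu), segment_add_one_zero,
      segment_add_one_zero] at h
    obtain ⟨p, ⟨-, hpu⟩, ⟨-, hpv⟩⟩ := h
    exact (eq_of_div_four_add_eq hδ hδ_lt hb ((mem_singleton_iff.1 hpu).symm.trans hpv)).symm
  · rw [gridSegment_of_not_even hu, gridSegment_of_not_even (mt huv.2 hu), segment_add_zero_one,
      segment_add_zero_one] at h
    obtain ⟨p, ⟨hpu, -⟩, ⟨hpv, -⟩⟩ := h
    exact eq_of_div_four_add_eq hδ hδ_lt ha ((mem_singleton_iff.1 hpu).symm.trans hpv)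

theorem gridSegment_inter_nonempty_iff (hδ : Function.Injective δ)
    (hδ_lt : ∀ n, |δ n| < 1 / 4) {u v : ℤ × ℤ} (huv : u ≠ v) :
    (gridSegment δ u ∩ gridSegment δ v).Nonempty ↔ |u.1 - v.1| + |u.2 - v.2| = 1 := by
  by_cases hp : Even (u.1 + u.2) ↔ Even (v.1 + v.2)
  · exact iff_of_false (huv ∘ eq_of_gridSegment_inter_nonempty hδ hδ_lt hp)
      (abs_sub_add_abs_sub_ne_one_of_even (Int.even_sub.2 hp))
  by_cases hu : Even (u.1 + u.2)
  · exact gridSegment_inter_nonempty_iff_of_even_of_not_even hδ_lt hu (hp ∘ iff_of_true hu)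
  · have hv : Even (v.1 + v.2) := not_not.1 (hp ∘ iff_of_false hu)
    rw [inter_comm, gridSegment_inter_nonempty_iff_of_even_of_not_even hδ_lt hv hu,
      abs_sub_comm v.1, abs_sub_comm v.2]

end GridSegment

/-- Every grid graph is the intersection graph of a set of axis-parallel unit
segments: for every finite `V ⊆ ℤ × ℤ` there is a family of closed
axis-parallel unit segments in `ℝ²`, one per point of `V`, such that two
segments of distinct points intersect iff the points are at ℓ¹-distance 1. -/
theorem gridGraph_is_unit_segment_intersection_graph (V : Finset (ℤ × ℤ)) :
    ∃ s : ℤ × ℤ → Set (ℝ × ℝ),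
      (∀ v ∈ V, ∃ a : ℝ × ℝ,
        s v = segment ℝ a (a + ((1 : ℝ), (0 : ℝ))) ∨
        s v = segment ℝ a (a + ((0 : ℝ), (1 : ℝ)))) ∧
      ∀ u ∈ V, ∀ v ∈ V, u ≠ v →
        ((s u ∩ s v).Nonempty ↔ |u.1 - v.1| + |u.2 - v.2| = 1) := by
  have hδ : Function.Injective fun n : ℤ => Real.arctan n / 8 := fun m n h => by
    simpa using h
  have hδ_lt (n : ℤ) : |Real.arctan n / 8| < 1 / 4 := by
    have := abs_lt.2 ⟨Real.neg_pi_div_two_lt_arctan n, Real.arctan_lt_pi_div_two n⟩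
    rw [abs_div, abs_of_pos (by norm_num : (0 : ℝ) < 8)]
    linarith [Real.pi_le_four]
  exact ⟨gridSegment _, fun v _ => exists_gridSegment_eq v,
    fun u _ v _ => gridSegment_inter_nonempty_iff hδ hδ_lt⟩
end

section
/- Let P be a thin Eulerian region, and let t and c be the number of turns and the number of cycles of its canonical cycle cover. Then the canonical cycle cover is a minimum-turn cycle cover of P; if c ≥ 2 then every tour of P has at least t + c turns, and P admits a tour with at most t + 2(c − 1) turns. Since t ≥ 4c, this tour has at most (6/5) times the minimum number of turns of a tour of P. -/
/-- The number of neighbors of a pixel within `P`. -/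
noncomputable def nbrCount (P : Set Pixel) (p : Pixel) : ℕ :=
  {q ∈ P | Adjacent p q}.ncard

/-- A region is thin if it contains no 2×2 block of four pixels. -/
def ThinRegion (P : Set Pixel) : Prop :=
  ¬∃ x y : ℤ, (x, y) ∈ P ∧ (x + 1, y) ∈ P ∧ (x, y + 1) ∈ P ∧ (x + 1, y + 1) ∈ P

/-- A region is Eulerian if every pixel has exactly 2 or 4 neighbors in it. -/
def EulerianRegion (P : Set Pixel) : Prop :=
  ∀ p ∈ P, nbrCount P p = 2 ∨ nbrCount P p = 4

/-- The number of times a collection of cycles traverses the (undirected) grid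
edge between pixels `u` and `v`. -/
def edgeUses (CC : List GridCycle) (u v : Pixel) : ℕ :=
  (CC.map (fun C => ((Finset.range C.k).filter
    (fun (i : ℕ) => (C.pts (i : ℤ) = u ∧ C.pts ((i : ℤ) + 1) = v) ∨
      (C.pts (i : ℤ) = v ∧ C.pts ((i : ℤ) + 1) = u))).card)).sum

/-- The canonical cycle cover of a thin Eulerian region: every grid edge is
traversed exactly once in total, and at every degree-4 pixel the walk goes
straight (turn cost 0). -/
def IsCanonicalCycleCover (P : Set Pixel) (CC : List GridCycle) : Prop :=
  IsCycleCover P CC ∧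
  (∀ u ∈ P, ∀ v ∈ P, Adjacent u v → edgeUses CC u v = 1) ∧
  ∀ C ∈ CC, ∀ i : ℤ, nbrCount P (C.pts i) = 4 → C.turnCost i = 0

/-! ### Auxiliary development -/

open Finset

attribute [local instance 0] Classical.propDecidable

namespace ThinAux

lemma adjacent_iff {p q : Pixel} : Adjacent p q ↔
    ((q.1 = p.1 + 1 ∧ q.2 = p.2) ∨ (q.1 + 1 = p.1 ∧ q.2 = p.2) ∨
     (q.1 = p.1 ∧ q.2 = p.2 + 1) ∨ (q.1 = p.1 ∧ q.2 + 1 = p.2)) := by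
  unfold Adjacent
  rcases abs_cases (p.1 - q.1) with ⟨h1, _⟩ | ⟨h1, _⟩ <;>
    rcases abs_cases (p.2 - q.2) with ⟨h2, _⟩ | ⟨h2, _⟩ <;> rw [h1, h2] <;> omega

lemma adj_symm {p q : Pixel} (h : Adjacent p q) : Adjacent q p := by
  rw [adjacent_iff] at h ⊢; omega

lemma adj_ne {p q : Pixel} (h : Adjacent p q) : p ≠ q := by
  rw [adjacent_iff] at h
  intro he; subst he; omega

lemma unit_cases {p q : Pixel} (h : Adjacent p q) :
    q - p = ((1:ℤ), (0:ℤ)) ∨ q - p = (-1, 0) ∨ q - p = (0, 1) ∨ q - p = (0, -1) := by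
  rw [adjacent_iff] at h
  rcases h with ⟨h1, h2⟩ | ⟨h1, h2⟩ | ⟨h1, h2⟩ | ⟨h1, h2⟩
  · left; ext <;> simp <;> omega
  · right; left; ext <;> simp <;> omega
  · right; right; left; ext <;> simp <;> omega
  · right; right; right; ext <;> simp <;> omega

namespace GC

variable (C : GridCycle)

lemma pts_add_mul (i : ℤ) (n : ℤ) : C.pts (i + n * C.k) = C.pts i := by
  induction n using Int.induction_on with
  | zero => simp
  | succ m ih =>
    have : i + (m + 1) * C.k = (i + m * C.k) + C.k := by ring
    rw [this, C.periodic, ih]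
  | pred m ih =>
    have : (i + (-m - 1) * C.k) + C.k = i + (-m) * C.k := by ring
    rw [← ih, ← this, C.periodic]

lemma pts_congr {i j : ℤ} (h : i % (C.k : ℤ) = j % (C.k : ℤ)) : C.pts i = C.pts j := by
  have hi : i = i % C.k + (i / C.k) * (C.k : ℤ) := by
    rw [mul_comm]; exact (Int.emod_add_mul_ediv i C.k).symm
  have hj : j = j % C.k + (j / C.k) * (C.k : ℤ) := by
    rw [mul_comm]; exact (Int.emod_add_mul_ediv j C.k).symm
  rw [hi, hj, pts_add_mul, pts_add_mul, h]

lemma k_pos : 0 < (C.k : ℤ) := by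
  have := C.two_le; omega

lemma emod_lt (j : ℤ) : j % (C.k : ℤ) < C.k := Int.emod_lt_of_pos j (k_pos C)

lemma emod_nonneg' (j : ℤ) : 0 ≤ j % (C.k : ℤ) := Int.emod_nonneg j (by have := C.two_le; omega)

/-- a natural-number slot equivalent (mod k) to any integer index -/
lemma exists_slot (j : ℤ) : ∃ s : ℕ, s ∈ Finset.range C.k ∧
    ∀ m : ℤ, C.pts ((s : ℤ) + m) = C.pts (j + m) := by
  refine ⟨(j % (C.k : ℤ)).toNat, ?_, ?_⟩
  · rw [Finset.mem_range]
    have h1 := emod_lt C j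
    have h2 := emod_nonneg' C j
    omega
  · intro m
    apply pts_congr
    have h2 := emod_nonneg' C j
    have : (((j % (C.k : ℤ)).toNat : ℤ)) = j % C.k := by omega
    rw [this, Int.add_emod, Int.emod_emod_of_dvd _ dvd_rfl, ← Int.add_emod]

lemma turnCost_congr {i j : ℤ} (h : ∀ m : ℤ, C.pts (i + m) = C.pts (j + m)) :
    C.turnCost i = C.turnCost j := by
  unfold GridCycle.turnCost
  have h1 : C.pts (i + 1) = C.pts (j + 1) := h 1
  have h0 : C.pts i = C.pts j := by simpa using h 0
  have hm : C.pts (i - 1) = C.pts (j - 1) := by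
    have := h (-1); simpa [sub_eq_add_neg] using this
  rw [h1, h0, hm]

end GC

/-! ### Sums of periodic functions -/

lemma sum_rot (k : ℕ) (f : ℤ → ℕ) (hf : ∀ i, f (i + k) = f i) (b : ℤ) :
    ∑ i ∈ Finset.range k, f (b + 1 + i) = ∑ i ∈ Finset.range k, f (b + i) := by
  rcases Nat.eq_zero_or_pos k with hk | hk
  · subst hk; simp
  obtain ⟨m, rfl⟩ : ∃ m, k = m + 1 := ⟨k - 1, by omega⟩
  have h1 := Finset.sum_range_succ' (fun i : ℕ => f (b + i)) m
  have h2 := Finset.sum_range_succ (fun i : ℕ => f (b + ((i + 1 : ℕ) : ℤ))) m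
  have h3 : f (b + (((m : ℕ) + 1 : ℕ) : ℤ)) = f (b + ((0 : ℕ) : ℤ)) := by
    have := hf b
    simpa using this
  have h4 : ∑ i ∈ Finset.range (m+1), f (b + 1 + i)
      = ∑ i ∈ Finset.range (m+1), f (b + ((i + 1 : ℕ) : ℤ)) := by
    apply Finset.sum_congr rfl; intro i _; congr 1; push_cast; ring
  rw [h4, h2, h1]
  omega

lemma sum_shift (k : ℕ) (f : ℤ → ℕ) (hf : ∀ i, f (i + k) = f i) (a : ℤ) :
    ∑ i ∈ Finset.range k, f (a + i) = ∑ i ∈ Finset.range k, f (i : ℤ) := by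
  induction a using Int.induction_on with
  | zero => simp
  | succ m ih => rw [← ih]; exact sum_rot k f hf m
  | pred m ih => rw [← ih, ← sum_rot k f hf (-m - 1)]; norm_num

end ThinAux
namespace ThinAux

lemma sum_range_add' (f : ℕ → ℕ) (m n : ℕ) :
    ∑ i ∈ Finset.range (m + n), f i
      = ∑ i ∈ Finset.range m, f i + ∑ i ∈ Finset.range n, f (m + i) := by
  induction n with
  | zero => simp
  | succ n ih =>
    rw [show m + (n+1) = (m+n)+1 by ring, Finset.sum_range_succ, ih,
      Finset.sum_range_succ, add_assoc]

def stepDir (C : GridCycle) (i : ℤ) : Pixel := C.pts (i + 1) - C.pts i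

lemma stepDir_unit (C : GridCycle) (i : ℤ) :
    stepDir C i = ((1:ℤ),(0:ℤ)) ∨ stepDir C i = (-1,0) ∨
    stepDir C i = (0,1) ∨ stepDir C i = (0,-1) :=
  unit_cases (C.adj i)

lemma stepDir_periodic (C : GridCycle) (i : ℤ) : stepDir C (i + C.k) = stepDir C i := by
  unfold stepDir
  rw [show i + (C.k:ℤ) + 1 = (i+1) + C.k by ring, C.periodic, C.periodic]

lemma turnCost_periodic (C : GridCycle) (i : ℤ) : C.turnCost (i + C.k) = C.turnCost i := by
  apply GC.turnCost_congr
  intro m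
  rw [show i + (C.k:ℤ) + m = (i + m) + C.k by ring, C.periodic]

def dirIdx (d : Pixel) : ZMod 4 :=
  if d = ((1:ℤ),(0:ℤ)) then 0 else if d = (-1,0) then 2 else if d = (0,1) then 1 else 3

def zdist (a b : ZMod 4) : ℕ := min (a - b).val (b - a).val

lemma zdist_refl : ∀ a : ZMod 4, zdist a a = 0 := by decide
lemma zdist_tri : ∀ a b c : ZMod 4, zdist a c ≤ zdist a b + zdist b c := by decide
lemma zdist_add_two : ∀ a b : ZMod 4, b = a + 2 → zdist a b = 2 ∧ zdist b a = 2 := by decide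

lemma dirIdx_neg (d : Pixel) (h : d = ((1:ℤ),(0:ℤ)) ∨ d = (-1,0) ∨ d = (0,1) ∨ d = (0,-1)) :
    dirIdx (-d) = dirIdx d + 2 := by
  rcases h with h|h|h|h <;> rw [h] <;> simp [dirIdx, Prod.ext_iff] <;> decide

lemma turnCost_eq_costFn (C : GridCycle) (i : ℤ) :
    C.turnCost i = (if stepDir C i = stepDir C (i-1) then 0
      else if stepDir C i = - stepDir C (i-1) then 2 else 1) := by
  unfold GridCycle.turnCost stepDir
  rw [show i - 1 + 1 = i by ring]

lemma zdist_le_cost (C : GridCycle) (i : ℤ) :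
    zdist (dirIdx (stepDir C (i-1))) (dirIdx (stepDir C i)) ≤ C.turnCost i := by
  rw [turnCost_eq_costFn]
  rcases stepDir_unit C (i-1) with h1|h1|h1|h1 <;> rcases stepDir_unit C i with h2|h2|h2|h2 <;>
    rw [h1, h2] <;> decide

lemma sum_stepDir (C : GridCycle) : ∑ i ∈ Finset.range C.k, stepDir C i = 0 := by
  have tele := Finset.sum_range_sub (fun n : ℕ => C.pts n) C.k
  have h1 : ∀ i : ℕ, C.pts ((i+1 : ℕ) : ℤ) - C.pts i = stepDir C i := by
    intro i; unfold stepDir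
    rw [show ((i+1 : ℕ) : ℤ) = (i:ℤ) + 1 by push_cast; ring]
  calc ∑ i ∈ Finset.range C.k, stepDir C i
      = ∑ i ∈ Finset.range C.k, (C.pts ((i+1:ℕ):ℤ) - C.pts i) :=
        Finset.sum_congr rfl (fun i _ => (h1 i).symm)
    _ = C.pts (C.k : ℤ) - C.pts 0 := tele
    _ = 0 := by
        rw [show ((C.k : ℤ)) = 0 + C.k by ring, C.periodic]
        exact sub_self _

lemma exists_opp (C : GridCycle) : ∃ j : ℕ, j ∈ Finset.range C.k ∧ 0 < j ∧
    stepDir C j = - stepDir C 0 := by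
  have hne : stepDir C 0 ≠ - stepDir C 0 := by
    rcases stepDir_unit C 0 with h|h|h|h <;> rw [h] <;> decide
  have h0mem : 0 ∈ Finset.range C.k := by
    rw [Finset.mem_range]; have := C.two_le; omega
  suffices h : ∃ j : ℕ, j ∈ Finset.range C.k ∧ stepDir C j = - stepDir C 0 by
    obtain ⟨j, hj1, hj2⟩ := h
    refine ⟨j, hj1, ?_, hj2⟩
    rcases Nat.eq_zero_or_pos j with rfl | hp
    · exact absurd hj2.symm (by push_cast at hj2 ⊢; exact fun hh => hne hh.symm)
    · exact hp
  by_contra hno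
  push_neg at hno
  set d0 := stepDir C 0 with hd0
  set f : ℕ → ℤ := fun i => d0.1 * (stepDir C i).1 + d0.2 * (stepDir C i).2 with hf
  have hsum0 : ∑ i ∈ Finset.range C.k, f i = 0 := by
    have hc := sum_stepDir C
    have h1 : (∑ i ∈ Finset.range C.k, stepDir C i).1 = 0 := by rw [hc]; rfl
    have h2 : (∑ i ∈ Finset.range C.k, stepDir C i).2 = 0 := by rw [hc]; rfl
    rw [Prod.fst_sum] at h1
    rw [Prod.snd_sum] at h2
    simp only [hf, Finset.sum_add_distrib, ← Finset.mul_sum, h1, h2, mul_zero, add_zero]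
  have hnn : ∀ i ∈ Finset.range C.k, 0 ≤ f i := by
    intro i hi
    have hnot := hno i hi
    rw [hd0] at hnot
    simp only [hf, hd0]
    rcases stepDir_unit C 0 with h|h|h|h <;> rcases stepDir_unit C (i:ℤ) with g|g|g|g <;>
      rw [h, g] at hnot ⊢ <;> first | decide | exact absurd (by decide) hnot
  have hone : f 0 = 1 := by
    simp only [hf, hd0, Nat.cast_zero]
    rcases stepDir_unit C 0 with h|h|h|h <;> rw [h] <;> decide
  have := Finset.single_le_sum hnn h0mem
  omega

lemma turns_ge_four (C : GridCycle) : 4 ≤ C.turns := by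
  obtain ⟨j, hjr, hj0, hjopp⟩ := exists_opp C
  rw [Finset.mem_range] at hjr
  set θ : ℤ → ZMod 4 := fun m => dirIdx (stepDir C m) with hθ
  have chain : ∀ (n : ℕ) (a : ℤ),
      zdist (θ a) (θ (a + n)) ≤ ∑ i ∈ Finset.range n, C.turnCost (a + 1 + i) := by
    intro n
    induction n with
    | zero => intro a; simpa using le_of_eq (zdist_refl (θ a))
    | succ n ih =>
      intro a
      rw [Finset.sum_range_succ]
      refine le_trans (zdist_tri _ (θ (a + n)) _) (add_le_add (ih a) ?_)
      have h2 := zdist_le_cost C (a + 1 + n)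
      have e1 : a + 1 + (n:ℤ) - 1 = a + n := by ring
      have e2 : a + ((n:ℕ)+1 : ℕ) = a + 1 + (n:ℤ) := by push_cast; ring
      rw [e1] at h2
      rw [e2]
      exact h2
  have hper : ∀ m : ℤ, C.turnCost (m + C.k) = C.turnCost m := turnCost_periodic C
  have hshift : ∑ i ∈ Finset.range C.k, C.turnCost (1 + i) = C.turns := by
    exact sum_shift C.k (fun m => C.turnCost m) hper 1
  have hsplit := sum_range_add' (fun i : ℕ => C.turnCost (1 + i)) j (C.k - j)
  rw [show j + (C.k - j) = C.k by omega] at hsplit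
  -- first block
  have hb1 : zdist (θ 0) (θ j) ≤ ∑ i ∈ Finset.range j, C.turnCost (1 + i) := by
    have h := chain j 0
    calc zdist (θ 0) (θ (j:ℤ)) = zdist (θ 0) (θ (0 + (j:ℤ))) := by rw [zero_add]
    _ ≤ ∑ i ∈ Finset.range j, C.turnCost (0 + 1 + i) := h
    _ = ∑ i ∈ Finset.range j, C.turnCost (1 + i) := by
        apply Finset.sum_congr rfl; intro i _; norm_num
  have hb2 : zdist (θ j) (θ 0) ≤ ∑ i ∈ Finset.range (C.k - j), C.turnCost (1 + (j + i : ℕ)) := by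
    have hch := chain (C.k - j) (j : ℤ)
    have hper2 : θ ((j:ℤ) + ((C.k - j : ℕ) : ℤ)) = θ 0 := by
      have : (j:ℤ) + ((C.k - j : ℕ) : ℤ) = 0 + (C.k : ℤ) := by push_cast; omega
      rw [this]
      show dirIdx (stepDir C (0 + (C.k:ℤ))) = dirIdx (stepDir C 0)
      rw [stepDir_periodic]
    rw [hper2] at hch
    calc zdist (θ j) (θ 0) ≤ ∑ i ∈ Finset.range (C.k - j), C.turnCost ((j:ℤ) + 1 + i) := hch
    _ = ∑ i ∈ Finset.range (C.k - j), C.turnCost (1 + (j + i : ℕ)) := by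
        apply Finset.sum_congr rfl; intro i _; congr 1; push_cast; ring
  have hz : θ (j:ℤ) = θ 0 + 2 := by
    show dirIdx (stepDir C (j:ℤ)) = dirIdx (stepDir C 0) + 2
    rw [hjopp, dirIdx_neg _ (stepDir_unit C 0)]
  obtain ⟨hz1, hz2⟩ := zdist_add_two (θ 0) (θ (j:ℤ)) hz
  rw [hz1] at hb1
  rw [hz2] at hb2
  omega

end ThinAux
namespace ThinAux

def occ (C : GridCycle) (p : Pixel) : ℕ :=
  ((Finset.range C.k).filter (fun i : ℕ => C.pts i = p)).card

def occL (CC : List GridCycle) (p : Pixel) : ℕ := (CC.map (fun C => occ C p)).sum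

def uses (C : GridCycle) (u v : Pixel) : ℕ :=
  ((Finset.range C.k).filter
    (fun i : ℕ => (C.pts (i:ℤ) = u ∧ C.pts ((i:ℤ)+1) = v) ∨
      (C.pts (i:ℤ) = v ∧ C.pts ((i:ℤ)+1) = u))).card

lemma edgeUses_eq (CC : List GridCycle) (u v : Pixel) :
    edgeUses CC u v = (CC.map (fun C => uses C u v)).sum := rfl

lemma uses_comm (C : GridCycle) (u v : Pixel) : uses C u v = uses C v u := by
  unfold uses
  congr 1
  apply Finset.filter_congr
  intro i _
  exact Iff.intro Or.symm Or.symm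

/-- strengthened slot lemma -/
lemma exists_slot' (C : GridCycle) (j : ℤ) : ∃ s : ℕ, s ∈ Finset.range C.k ∧
    ((s:ℤ) % (C.k:ℤ) = j % (C.k:ℤ)) ∧ ∀ m : ℤ, C.pts ((s : ℤ) + m) = C.pts (j + m) := by
  refine ⟨(j % (C.k : ℤ)).toNat, ?_, ?_, ?_⟩
  · rw [Finset.mem_range]
    have h1 := GC.emod_lt C j
    have h2 := GC.emod_nonneg' C j
    omega
  · have h2 := GC.emod_nonneg' C j
    have h3 : (((j % (C.k : ℤ)).toNat : ℤ)) = j % C.k := by omega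
    rw [h3, Int.emod_emod_of_dvd _ dvd_rfl]
  · intro m
    apply GC.pts_congr
    have h2 := GC.emod_nonneg' C j
    have h3 : (((j % (C.k : ℤ)).toNat : ℤ)) = j % C.k := by omega
    rw [Int.add_emod, h3, Int.emod_emod_of_dvd _ dvd_rfl, ← Int.add_emod]

lemma occ_pos_iff (C : GridCycle) (p : Pixel) : 0 < occ C p ↔ p ∈ C.covers := by
  constructor
  · intro h
    obtain ⟨i, hi⟩ := Finset.card_pos.mp h
    rw [Finset.mem_filter] at hi
    exact ⟨(i : ℤ), hi.2⟩
  · rintro ⟨j, rfl⟩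
    obtain ⟨s, hs, _, hval⟩ := exists_slot' C j
    apply Finset.card_pos.mpr
    refine ⟨s, Finset.mem_filter.mpr ⟨hs, ?_⟩⟩
    have := hval 0
    simpa using this

lemma covers_of_uses_pos {C : GridCycle} {u v : Pixel} (h : 0 < uses C u v) :
    u ∈ C.covers ∧ v ∈ C.covers := by
  obtain ⟨i, hi⟩ := Finset.card_pos.mp h
  rw [Finset.mem_filter] at hi
  rcases hi.2 with ⟨h1, h2⟩ | ⟨h1, h2⟩
  · exact ⟨⟨(i:ℤ), h1⟩, ⟨(i:ℤ)+1, h2⟩⟩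
  · exact ⟨⟨(i:ℤ)+1, h2⟩, ⟨(i:ℤ), h1⟩⟩

noncomputable def NF (P : Set Pixel) (hfin : P.Finite) (p : Pixel) : Finset Pixel :=
  hfin.toFinset.filter (fun q => Adjacent p q)

lemma mem_NF {P : Set Pixel} {hfin : P.Finite} {p q : Pixel} :
    q ∈ NF P hfin p ↔ q ∈ P ∧ Adjacent p q := by
  simp [NF, Set.Finite.mem_toFinset]

lemma nbrCount_eq {P : Set Pixel} (hfin : P.Finite) (p : Pixel) :
    nbrCount P p = (NF P hfin p).card := by
  unfold nbrCount
  rw [show {q ∈ P | Adjacent p q} = ↑(NF P hfin p) by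
    ext q; simp [mem_NF]]
  exact Set.ncard_coe_finset _

/-- the in/out incidence formula at a pixel -/
lemma sum_uses_eq {P : Set Pixel} (hfin : P.Finite) (C : GridCycle) (hC : C.covers ⊆ P)
    (p : Pixel) : ∑ v ∈ NF P hfin p, uses C p v = 2 * occ C p := by
  have hcard : ∀ v, uses C p v = ∑ i ∈ Finset.range C.k,
      (if (C.pts (i:ℤ) = p ∧ C.pts ((i:ℤ)+1) = v) ∨ (C.pts (i:ℤ) = v ∧ C.pts ((i:ℤ)+1) = p)
        then 1 else 0) := by
    intro v; exact Finset.card_filter _ _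
  rw [Finset.sum_congr rfl (fun v _ => hcard v), Finset.sum_comm]
  have key : ∀ i ∈ Finset.range C.k,
      (∑ v ∈ NF P hfin p, if (C.pts (i:ℤ) = p ∧ C.pts ((i:ℤ)+1) = v) ∨
          (C.pts (i:ℤ) = v ∧ C.pts ((i:ℤ)+1) = p) then 1 else 0)
        = (if C.pts (i:ℤ) = p then 1 else 0) + (if C.pts ((i:ℤ)+1) = p then 1 else 0) := by
    intro i _
    have hadj := C.adj (i:ℤ)
    have hne : C.pts (i:ℤ) ≠ C.pts ((i:ℤ)+1) := adj_ne hadj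
    rw [← Finset.card_filter]
    by_cases h1 : C.pts (i:ℤ) = p <;> by_cases h2 : C.pts ((i:ℤ)+1) = p
    · exact absurd (h1.trans h2.symm) hne
    · rw [if_pos h1, if_neg h2]
      have : (NF P hfin p).filter (fun v => (C.pts (i:ℤ) = p ∧ C.pts ((i:ℤ)+1) = v) ∨
          (C.pts (i:ℤ) = v ∧ C.pts ((i:ℤ)+1) = p)) = {C.pts ((i:ℤ)+1)} := by
        ext v
        simp only [Finset.mem_filter, Finset.mem_singleton]
        constructor
        · rintro ⟨hv, ⟨_, hh⟩ | ⟨_, hh⟩⟩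
          · exact hh.symm
          · exact absurd hh h2
        · rintro rfl
          refine ⟨mem_NF.mpr ⟨hC ⟨(i:ℤ)+1, rfl⟩, ?_⟩, Or.inl ⟨h1, rfl⟩⟩
          rw [← h1]; exact hadj
      rw [this]; simp
    · rw [if_neg h1, if_pos h2]
      have : (NF P hfin p).filter (fun v => (C.pts (i:ℤ) = p ∧ C.pts ((i:ℤ)+1) = v) ∨
          (C.pts (i:ℤ) = v ∧ C.pts ((i:ℤ)+1) = p)) = {C.pts (i:ℤ)} := by
        ext v
        simp only [Finset.mem_filter, Finset.mem_singleton]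
        constructor
        · rintro ⟨hv, ⟨hh, _⟩ | ⟨hh, _⟩⟩
          · exact absurd hh h1
          · exact hh.symm
        · rintro rfl
          refine ⟨mem_NF.mpr ⟨hC ⟨(i:ℤ), rfl⟩, ?_⟩, Or.inr ⟨rfl, h2⟩⟩
          rw [← h2]; exact adj_symm hadj
      rw [this]; simp
    · rw [if_neg h1, if_neg h2]
      have : (NF P hfin p).filter (fun v => (C.pts (i:ℤ) = p ∧ C.pts ((i:ℤ)+1) = v) ∨
          (C.pts (i:ℤ) = v ∧ C.pts ((i:ℤ)+1) = p)) = ∅ := by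
        ext v
        simp only [Finset.mem_filter, Finset.notMem_empty, iff_false]
        rintro ⟨hv, ⟨hh, _⟩ | ⟨_, hh⟩⟩
        · exact h1 hh
        · exact h2 hh
      rw [this]; simp
  rw [Finset.sum_congr rfl key, Finset.sum_add_distrib]
  have e1 : ∑ i ∈ Finset.range C.k, (if C.pts (i:ℤ) = p then 1 else 0) = occ C p := by
    rw [occ, Finset.card_filter]
  have e2 : ∑ i ∈ Finset.range C.k, (if C.pts ((i:ℤ)+1) = p then 1 else 0) = occ C p := by
    have hper : ∀ m : ℤ, (if C.pts (m + (C.k:ℤ)) = p then (1:ℕ) else 0)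
        = (if C.pts m = p then 1 else 0) := by
      intro m; rw [C.periodic]
    have := sum_shift C.k (fun m => if C.pts m = p then 1 else 0) hper 1
    calc ∑ i ∈ Finset.range C.k, (if C.pts ((i:ℤ)+1) = p then (1:ℕ) else 0)
        = ∑ i ∈ Finset.range C.k, (if C.pts (1+(i:ℤ)) = p then (1:ℕ) else 0) := by
          apply Finset.sum_congr rfl; intro i _
          rw [add_comm (i:ℤ) 1]
      _ = ∑ i ∈ Finset.range C.k, (if C.pts (i:ℤ) = p then (1:ℕ) else 0) := this
      _ = occ C p := by rw [occ, Finset.card_filter]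
  rw [e1, e2]; ring

lemma sum_edgeUses_eq {P : Set Pixel} (hfin : P.Finite) (CC : List GridCycle)
    (hCC : ∀ C ∈ CC, C.covers ⊆ P) (p : Pixel) :
    ∑ v ∈ NF P hfin p, edgeUses CC p v = 2 * occL CC p := by
  induction CC with
  | nil => simp [edgeUses, occL]
  | cons C l ih =>
    have h1 : ∀ v, edgeUses (C :: l) p v = uses C p v + edgeUses l p v := by
      intro v; rw [edgeUses_eq, edgeUses_eq, List.map_cons, List.sum_cons]
    rw [Finset.sum_congr rfl (fun v _ => h1 v), Finset.sum_add_distrib,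
      sum_uses_eq hfin C (hCC C (by simp)) p, ih (fun D hD => hCC D (by simp [hD]))]
    show 2 * occ C p + 2 * occL l p = 2 * occL (C :: l) p
    rw [occL, occL, List.map_cons, List.sum_cons]
    ring

lemma single_le_sumL (f : GridCycle → ℕ) {l : List GridCycle} {C : GridCycle} (h : C ∈ l) :
    f C ≤ (l.map f).sum :=
  List.single_le_sum (fun x _ => Nat.zero_le x) _ (List.mem_map_of_mem (f := f) h)

lemma two_mem_le_sumL (f : GridCycle → ℕ) {l : List GridCycle} {C D : GridCycle}
    (hC : C ∈ l) (hD : D ∈ l) (hne : C ≠ D) : f C + f D ≤ (l.map f).sum := by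
  induction l with
  | nil => cases hC
  | cons a l ih =>
    rw [List.map_cons, List.sum_cons]
    rcases List.mem_cons.mp hC with rfl | hC'
    · have hD' : D ∈ l := by
        rcases List.mem_cons.mp hD with rfl | h
        · exact absurd rfl hne
        · exact h
      exact add_le_add le_rfl (single_le_sumL f hD')
    · rcases List.mem_cons.mp hD with rfl | hD'
      · rw [add_comm (f C) (f D)]
        exact add_le_add le_rfl (single_le_sumL f hC')
      · exact le_trans (ih hC' hD') (Nat.le_add_left _ _)

lemma exists_pos_of_sum_pos (f : GridCycle → ℕ) (l : List GridCycle)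
    (h : 0 < (l.map f).sum) : ∃ C ∈ l, 0 < f C := by
  by_contra hno
  push_neg at hno
  have : (l.map f).sum = 0 := by
    apply List.sum_eq_zero
    intro x hx
    obtain ⟨C, hC, rfl⟩ := List.mem_map.mp hx
    exact Nat.eq_zero_of_le_zero (hno C hC)
  omega

end ThinAux
namespace ThinAux

def IsCorner (P : Set Pixel) (p : Pixel) : Prop :=
  p ∈ P ∧ nbrCount P p = 2 ∧
    ∀ q r : Pixel, q ∈ P → r ∈ P → Adjacent p q → Adjacent p r → q ≠ r → q + r ≠ p + p

lemma eq_of_sub_eq_rev {a b : Pixel} (h : a - b = b - a) : a = b := by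
  have h1 : a.1 - b.1 = b.1 - a.1 := congrArg Prod.fst h
  have h2 : a.2 - b.2 = b.2 - a.2 := congrArg Prod.snd h
  rw [Prod.ext_iff]; constructor <;> omega

lemma adj_pred (C : GridCycle) (i : ℤ) : Adjacent (C.pts i) (C.pts (i-1)) := by
  have := C.adj (i-1)
  rw [sub_add_cancel] at this
  exact adj_symm this

lemma nbr_pair {P : Set Pixel} (hfin : P.Finite) {p q r : Pixel} (h2 : nbrCount P p = 2)
    (hq : q ∈ P) (hr : r ∈ P) (haq : Adjacent p q) (har : Adjacent p r) (hne : q ≠ r) :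
    ∀ s ∈ P, Adjacent p s → s = q ∨ s = r := by
  intro s hs has
  have hsub : ({q, r} : Finset Pixel) ⊆ NF P hfin p := by
    intro x hx
    rcases Finset.mem_insert.mp hx with rfl | hx
    · exact mem_NF.mpr ⟨hq, haq⟩
    · rw [Finset.mem_singleton] at hx; subst hx; exact mem_NF.mpr ⟨hr, har⟩
  have hcard : ({q, r} : Finset Pixel).card = 2 := Finset.card_pair hne
  have hNF : (NF P hfin p).card = 2 := by rw [← nbrCount_eq hfin, h2]
  have heq : ({q, r} : Finset Pixel) = NF P hfin p :=
    Finset.eq_of_subset_of_card_le hsub (by omega)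
  have : s ∈ ({q,r} : Finset Pixel) := heq ▸ mem_NF.mpr ⟨hs, has⟩
  simpa using this

lemma noncorner_straight {P : Set Pixel} (hfin : P.Finite) {p q r : Pixel}
    (hp : p ∈ P) (h2 : nbrCount P p = 2) (hnc : ¬ IsCorner P p)
    (hq : q ∈ P) (hr : r ∈ P) (haq : Adjacent p q) (har : Adjacent p r) (hne : q ≠ r) :
    q + r = p + p := by
  unfold IsCorner at hnc
  push_neg at hnc
  obtain ⟨q', r', hq', hr', haq', har', hne', heq'⟩ := hnc hp h2
  rcases nbr_pair hfin h2 hq' hr' haq' har' hne' q hq haq with h1 | h1 <;>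
    rcases nbr_pair hfin h2 hq' hr' haq' har' hne' r hr har with h2' | h2'
  · exact absurd (h1.trans h2'.symm) hne
  · rw [h1, h2']; exact heq'
  · rw [h1, h2', add_comm]; exact heq'
  · exact absurd (h1.trans h2'.symm) hne

section CostLemmas

variable {P : Set Pixel} {C : GridCycle}

lemma cost_pos_of_corner (hC : C.covers ⊆ P) {i : ℤ} (hcor : IsCorner P (C.pts i)) :
    1 ≤ C.turnCost i := by
  unfold GridCycle.turnCost
  split_ifs with h1 h2
  · exfalso
    have hsum : C.pts (i+1) + C.pts (i-1) = C.pts i + C.pts i :=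
      (sub_eq_sub_iff_add_eq_add.mp h1)
    have hnepred : C.pts (i+1) ≠ C.pts (i-1) := by
      intro he
      rw [he] at h1
      exact adj_ne (adj_pred C i) (eq_of_sub_eq_rev h1).symm
    exact hcor.2.2 (C.pts (i+1)) (C.pts (i-1)) (hC ⟨i+1, rfl⟩) (hC ⟨i-1, rfl⟩)
      (C.adj i) (adj_pred C i) hnepred hsum
  · omega
  · omega

lemma cost_two_of_uturn {i : ℤ} (h : C.pts (i+1) = C.pts (i-1)) : C.turnCost i = 2 := by
  unfold GridCycle.turnCost
  have hne := adj_ne (C.adj i)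
  rw [if_neg, if_pos]
  · rw [h, neg_sub]
  · intro h1
    rw [h] at h1
    exact hne ((eq_of_sub_eq_rev h1).symm.trans h.symm)

lemma cost_one_of_corner (hC : C.covers ⊆ P) {i : ℤ} (hcor : IsCorner P (C.pts i))
    (hne : C.pts (i+1) ≠ C.pts (i-1)) : C.turnCost i = 1 := by
  unfold GridCycle.turnCost
  rw [if_neg, if_neg]
  · intro h2
    rw [neg_sub] at h2
    exact hne (by
      have : C.pts (i+1) - C.pts i + C.pts i = C.pts (i-1) - C.pts i + C.pts i := by rw [h2]
      simpa using this)
  · intro h1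
    have hsum : C.pts (i+1) + C.pts (i-1) = C.pts i + C.pts i :=
      sub_eq_sub_iff_add_eq_add.mp h1
    exact hcor.2.2 (C.pts (i+1)) (C.pts (i-1)) (hC ⟨i+1, rfl⟩) (hC ⟨i-1, rfl⟩)
      (C.adj i) (adj_pred C i) hne hsum

lemma cost_zero_of_noncorner (hfin : P.Finite) (hC : C.covers ⊆ P) {i : ℤ}
    (hp : C.pts i ∈ P) (h2 : nbrCount P (C.pts i) = 2) (hnc : ¬ IsCorner P (C.pts i))
    (hne : C.pts (i+1) ≠ C.pts (i-1)) : C.turnCost i = 0 := by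
  unfold GridCycle.turnCost
  rw [if_pos]
  apply sub_eq_sub_iff_add_eq_add.mpr
  exact noncorner_straight hfin hp h2 hnc (hC ⟨i+1, rfl⟩) (hC ⟨i-1, rfl⟩)
    (C.adj i) (adj_pred C i) hne

end CostLemmas

section Canonical

variable {P : Set Pixel} {CC : List GridCycle}

/-- the in-cycle U-turn is impossible for a canonical cover -/
lemma canon_no_uturn (hCC : IsCanonicalCycleCover P CC) {C : GridCycle} (hC : C ∈ CC)
    (i : ℤ) : C.pts (i+1) ≠ C.pts (i-1) := by
  intro heq
  have hsubP : C.covers ⊆ P := hCC.1.1 C hC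
  have hpP : C.pts i ∈ P := hsubP ⟨i, rfl⟩
  have hnP : C.pts (i+1) ∈ P := hsubP ⟨i+1, rfl⟩
  have hadj : Adjacent (C.pts i) (C.pts (i+1)) := C.adj i
  obtain ⟨s1, hs1r, hs1m, hs1v⟩ := exists_slot' C (i-1)
  obtain ⟨s2, hs2r, hs2m, hs2v⟩ := exists_slot' C i
  have hs12 : s1 ≠ s2 := by
    intro he
    rw [he, hs2m] at hs1m
    have : ((i - 1) - i) % (C.k : ℤ) = 0 := by
      rw [Int.sub_emod, hs1m, sub_self, Int.zero_emod]
    have hdvd : (C.k : ℤ) ∣ (i - 1 - i) := Int.dvd_of_emod_eq_zero this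
    rw [show i - 1 - i = -1 by ring] at hdvd
    have := Int.le_of_dvd (by norm_num) hdvd.neg_right
    have h2 := C.two_le
    omega
  have hsub : ({s1, s2} : Finset ℕ) ⊆ (Finset.range C.k).filter
      (fun j : ℕ => (C.pts (j:ℤ) = C.pts i ∧ C.pts ((j:ℤ)+1) = C.pts (i+1)) ∨
        (C.pts (j:ℤ) = C.pts (i+1) ∧ C.pts ((j:ℤ)+1) = C.pts i)) := by
    intro x hx
    rcases Finset.mem_insert.mp hx with rfl | hx
    · refine Finset.mem_filter.mpr ⟨hs1r, Or.inr ⟨?_, ?_⟩⟩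
      · have := hs1v 0
        simp only [add_zero] at this
        rw [this, ← heq]
      · have := hs1v 1
        rw [this, show i - 1 + 1 = i by ring]
    · rw [Finset.mem_singleton] at hx; subst hx
      refine Finset.mem_filter.mpr ⟨hs2r, Or.inl ⟨?_, ?_⟩⟩
      · have := hs2v 0
        simpa using this
      · exact hs2v 1
  have h2le : 2 ≤ uses C (C.pts i) (C.pts (i+1)) := by
    calc 2 = ({s1, s2} : Finset ℕ).card := (Finset.card_pair hs12).symm
    _ ≤ _ := Finset.card_le_card hsub
  have hle : uses C (C.pts i) (C.pts (i+1)) ≤ edgeUses CC (C.pts i) (C.pts (i+1)) := by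
    rw [edgeUses_eq]
    exact single_le_sumL (fun D => uses D (C.pts i) (C.pts (i+1))) hC
  have := hCC.2.1 (C.pts i) hpP (C.pts (i+1)) hnP hadj
  omega

lemma canon_cost (hfin : P.Finite) (heul : EulerianRegion P)
    (hCC : IsCanonicalCycleCover P CC) {C : GridCycle} (hC : C ∈ CC) (i : ℤ) :
    C.turnCost i = (if IsCorner P (C.pts i) then 1 else 0) := by
  have hsubP : C.covers ⊆ P := hCC.1.1 C hC
  have hpP : C.pts i ∈ P := hsubP ⟨i, rfl⟩
  by_cases hcor : IsCorner P (C.pts i)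
  · rw [if_pos hcor]
    exact cost_one_of_corner hsubP hcor (canon_no_uturn hCC hC i)
  · rw [if_neg hcor]
    rcases heul _ hpP with h2 | h4
    · exact cost_zero_of_noncorner hfin hsubP hpP h2 hcor (canon_no_uturn hCC hC i)
    · exact hCC.2.2 C hC i h4

lemma canon_occL (hfin : P.Finite) (hCC : IsCanonicalCycleCover P CC) {p : Pixel}
    (hp : p ∈ P) : 2 * occL CC p = nbrCount P p := by
  rw [← sum_edgeUses_eq hfin CC hCC.1.1 p, nbrCount_eq hfin]
  rw [Finset.sum_congr rfl (fun v hv =>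
    hCC.2.1 p hp v (mem_NF.mp hv).1 (mem_NF.mp hv).2)]
  simp

lemma canon_corner_occL (hfin : P.Finite) (hCC : IsCanonicalCycleCover P CC) {p : Pixel}
    (hcor : IsCorner P p) : occL CC p = 1 := by
  have := canon_occL hfin hCC hcor.1
  rw [hcor.2.1] at this
  omega

noncomputable def cornersF (P : Set Pixel) (hfin : P.Finite) : Finset Pixel :=
  hfin.toFinset.filter (fun p => IsCorner P p)

lemma mem_cornersF {P : Set Pixel} {hfin : P.Finite} {p : Pixel} :
    p ∈ cornersF P hfin ↔ IsCorner P p := by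
  simp only [cornersF, Finset.mem_filter, Set.Finite.mem_toFinset]
  exact ⟨fun h => h.2, fun h => ⟨h.1, h⟩⟩

lemma list_sum_finsetsum (l : List GridCycle) (s : Finset Pixel) (g : GridCycle → Pixel → ℕ) :
    (l.map (fun C => ∑ p ∈ s, g C p)).sum = ∑ p ∈ s, (l.map (fun C => g C p)).sum := by
  induction l with
  | nil => simp
  | cons a l ih => simp [List.map_cons, List.sum_cons, ih, Finset.sum_add_distrib]

lemma canon_turns_eq (hfin : P.Finite) (heul : EulerianRegion P)
    (hCC : IsCanonicalCycleCover P CC) {C : GridCycle} (hC : C ∈ CC) :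
    C.turns = ∑ p ∈ cornersF P hfin, occ C p := by
  have hsubP : C.covers ⊆ P := hCC.1.1 C hC
  have h1 : C.turns = ((Finset.range C.k).filter (fun i : ℕ => IsCorner P (C.pts i))).card := by
    unfold GridCycle.turns
    rw [Finset.card_filter]
    apply Finset.sum_congr rfl
    intro i _
    exact canon_cost hfin heul hCC hC i
  rw [h1]
  rw [Finset.card_eq_sum_card_fiberwise (f := fun i : ℕ => C.pts i)
    (t := cornersF P hfin) (fun x hx => mem_cornersF.mpr (Finset.mem_filter.mp hx).2)]
  apply Finset.sum_congr rfl
  intro p hp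
  unfold occ
  congr 1
  ext i
  simp only [Finset.mem_filter, Finset.mem_range]
  constructor
  · rintro ⟨⟨h1', _⟩, h3⟩; exact ⟨h1', h3⟩
  · rintro ⟨h1', h3⟩
    exact ⟨⟨h1', h3 ▸ mem_cornersF.mp hp⟩, h3⟩

lemma canon_coverTurns (hfin : P.Finite) (heul : EulerianRegion P)
    (hCC : IsCanonicalCycleCover P CC) :
    coverTurns CC = (cornersF P hfin).card := by
  unfold coverTurns
  have h1 : CC.map GridCycle.turns = CC.map (fun C => ∑ p ∈ cornersF P hfin, occ C p) := by
    apply List.map_congr_left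
    intro C hC
    exact canon_turns_eq hfin heul hCC hC
  rw [h1, list_sum_finsetsum]
  rw [Finset.card_eq_sum_ones]
  apply Finset.sum_congr rfl
  intro p hp
  exact canon_corner_occL hfin hCC (mem_cornersF.mp hp)

/-- lower bound for arbitrary cycle covers -/
lemma cover_lower_aux {P : Set Pixel} (hfin : P.Finite) :
    ∀ (l : List GridCycle), (∀ C ∈ l, C.covers ⊆ P) →
    ∀ s : Finset Pixel, (∀ p ∈ s, IsCorner P p) → (∀ p ∈ s, ∃ C ∈ l, p ∈ C.covers) →
    s.card ≤ coverTurns l := by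
  intro l
  induction l with
  | nil =>
    intro _ s _ hcov
    rcases Finset.eq_empty_or_nonempty s with rfl | ⟨p, hp⟩
    · simp
    · obtain ⟨C, hC, _⟩ := hcov p hp
      cases hC
  | cons C l ih =>
    intro hsub s hcor hcov
    classical
    set s1 := s.filter (fun p => p ∈ C.covers) with hs1
    set s2 := s.filter (fun p => ¬ p ∈ C.covers) with hs2
    have hcard : s1.card + s2.card = s.card :=
      Finset.card_filter_add_card_filter_not (fun p => p ∈ C.covers)
    have hs2le : s2.card ≤ coverTurns l := by
      apply ih (fun D hD => hsub D (by simp [hD])) s2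
      · intro p hp; exact hcor p (Finset.mem_filter.mp hp).1
      · intro p hp
        obtain ⟨hpmem, hpnc⟩ := Finset.mem_filter.mp hp
        obtain ⟨D, hD, hpD⟩ := hcov p hpmem
        rcases List.mem_cons.mp hD with rfl | hD'
        · exact absurd hpD hpnc
        · exact ⟨D, hD', hpD⟩
    have hCsub : C.covers ⊆ P := hsub C (by simp)
    have hs1le : s1.card ≤ C.turns := by
      have hsurj : Set.SurjOn (fun i : ℕ => C.pts i)
          ↑((Finset.range C.k).filter (fun i : ℕ => C.pts i ∈ s1)) ↑s1 := by
        intro p hp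
        have hp' : p ∈ s1 := hp
        have hpc : p ∈ C.covers := (Finset.mem_filter.mp hp').2
        obtain ⟨j, hj⟩ := hpc
        obtain ⟨sl, hslr, _, hslv⟩ := exists_slot' C j
        have hval : C.pts (sl:ℤ) = p := by
          have := hslv 0
          simp only [add_zero] at this
          rw [this, hj]
        refine ⟨sl, ?_, hval⟩
        simp only [Finset.coe_filter, Set.mem_setOf_eq]
        exact ⟨Finset.mem_range.mp hslr |> Finset.mem_range.mpr, hval ▸ hp'⟩
      have h1 := Finset.card_le_card_of_surjOn _ hsurj
      calc s1.card ≤ ((Finset.range C.k).filter (fun i : ℕ => C.pts i ∈ s1)).card := h1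
      _ = ∑ i ∈ (Finset.range C.k).filter (fun i : ℕ => C.pts i ∈ s1), 1 := by
          rw [Finset.card_eq_sum_ones]
      _ ≤ ∑ i ∈ (Finset.range C.k).filter (fun i : ℕ => C.pts i ∈ s1), C.turnCost i := by
          apply Finset.sum_le_sum
          intro i hi
          have hmem := (Finset.mem_filter.mp hi).2
          exact cost_pos_of_corner hCsub (hcor _ (Finset.mem_filter.mp hmem).1)
      _ ≤ ∑ i ∈ Finset.range C.k, C.turnCost i :=
          Finset.sum_le_sum_of_subset (Finset.filter_subset _ _)
      _ = C.turns := rfl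
    have hct : coverTurns (C :: l) = C.turns + coverTurns l := by
      unfold coverTurns
      rw [List.map_cons, List.sum_cons]
    omega

end Canonical

end ThinAux
namespace ThinAux

section Merge

variable (T G : GridCycle)

def mK (T G : GridCycle) : ℤ := ((T.k + G.k : ℕ) : ℤ)

def mpts (T G : GridCycle) (a b : ℤ) : ℤ → Pixel := fun i =>
  if i % mK T G < (T.k : ℤ) then T.pts (a + i % mK T G)
  else G.pts (b + i % mK T G - T.k)

lemma mK_pos : 0 < mK T G := by
  have := T.two_le; have := G.two_le; unfold mK; push_cast; omega

lemma mpts_mod (a b i : ℤ) : mpts T G a b (i % mK T G) = mpts T G a b i := by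
  unfold mpts
  rw [Int.emod_emod_of_dvd _ dvd_rfl]

lemma mpts_per (a b i : ℤ) : mpts T G a b (i + mK T G) = mpts T G a b i := by
  unfold mpts
  rw [show i + mK T G = i + (mK T G) * 1 by ring, Int.add_mul_emod_self_left]

lemma mpts_eq1 (a b : ℤ) {j : ℤ} (h0 : 0 ≤ j) (h1 : j < T.k) :
    mpts T G a b j = T.pts (a + j) := by
  unfold mpts
  have hK : j < mK T G := by have := G.two_le; unfold mK; push_cast; omega
  rw [Int.emod_eq_of_lt h0 hK, if_pos h1]

lemma mpts_eq2 (a b : ℤ) {j : ℤ} (h0 : 0 ≤ j) (h1 : j < G.k) :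
    mpts T G a b ((T.k : ℤ) + j) = G.pts (b + j) := by
  unfold mpts
  have h2 : (0:ℤ) ≤ (T.k:ℤ) + j := by have := T.two_le; omega
  have hK : (T.k:ℤ) + j < mK T G := by unfold mK; push_cast; omega
  rw [Int.emod_eq_of_lt h2 hK, if_neg (by omega)]
  congr 1; ring

variable {T G}

lemma mpts_eq1' {a b : ℤ} (h : T.pts a = G.pts b) {j : ℤ} (h0 : 0 ≤ j) (h1 : j ≤ T.k) :
    mpts T G a b j = T.pts (a + j) := by
  rcases lt_or_eq_of_le h1 with hlt | heq
  · exact mpts_eq1 T G a b h0 hlt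
  · subst heq
    calc mpts T G a b ((T.k:ℤ)) = mpts T G a b ((T.k:ℤ) + 0) := by norm_num
      _ = G.pts (b + 0) := mpts_eq2 T G a b le_rfl (by have := G.two_le; push_cast; omega)
      _ = G.pts b := by norm_num
      _ = T.pts a := h.symm
      _ = T.pts (a + (T.k:ℤ)) := (T.periodic a).symm

lemma mpts_eq2' {a b : ℤ} (h : T.pts a = G.pts b) {j : ℤ} (h0 : 0 ≤ j) (h1 : j ≤ G.k) :
    mpts T G a b ((T.k:ℤ) + j) = G.pts (b + j) := by
  rcases lt_or_eq_of_le h1 with hlt | heq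
  · exact mpts_eq2 T G a b h0 hlt
  · subst heq
    calc mpts T G a b ((T.k:ℤ) + G.k) = mpts T G a b (0 + mK T G) := by
          rw [show (0:ℤ) + mK T G = (T.k:ℤ) + G.k by unfold mK; push_cast; ring]
      _ = mpts T G a b 0 := mpts_per T G a b 0
      _ = T.pts (a + 0) := mpts_eq1 T G a b le_rfl (by have := T.two_le; push_cast; omega)
      _ = G.pts b := by rw [add_zero, h]
      _ = G.pts (b + G.k) := (G.periodic b).symm

def mergeAt (T G : GridCycle) (a b : ℤ) (h : T.pts a = G.pts b) : GridCycle where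
  k := T.k + G.k
  two_le := le_trans T.two_le (Nat.le_add_right _ _)
  pts := mpts T G a b
  periodic := fun i => mpts_per T G a b i
  adj := by
    intro i
    have hTk := T.two_le
    have hGk := G.two_le
    set K := mK T G with hK
    have hKpos : 0 < K := mK_pos T G
    set r := i % K with hr
    have hr0 : 0 ≤ r := Int.emod_nonneg i (by omega)
    have hrK : r < K := Int.emod_lt_of_pos i hKpos
    have hKval : K = (T.k : ℤ) + G.k := by unfold mK at hK; rw [hK]; push_cast; ring
    have hpi : mpts T G a b i = mpts T G a b r := (mpts_mod T G a b i).symm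
    have hpi1 : mpts T G a b (i+1) = mpts T G a b (r+1) := by
      have hmod : i % K = r % K := by
        rw [hr]; exact (Int.emod_emod_of_dvd i dvd_rfl).symm
      have h1 : (i+1) % K = (r+1) % K := Int.ModEq.add_right 1 hmod
      rw [← mpts_mod T G a b (i+1), h1, mpts_mod]
    rw [hpi, hpi1]
    rcases lt_or_ge r ((T.k : ℤ)) with hc1 | hc1
    · -- T part
      rw [mpts_eq1' h hr0 (by omega), mpts_eq1' h (by omega) (by omega)]
      have := T.adj (a + r)
      rwa [show a + r + 1 = a + (r+1) by ring] at this
    rcases lt_or_ge r (K - 1) with hc3 | hc3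
    · -- G interior
      obtain ⟨j, hj⟩ : ∃ j, r = (T.k:ℤ) + j := ⟨r - T.k, by ring⟩
      have hj0 : 0 ≤ j := by omega
      rw [hj, mpts_eq2' h hj0 (by omega), show (T.k:ℤ) + j + 1 = (T.k:ℤ) + (j+1) by ring,
        mpts_eq2' h (by omega) (by omega)]
      have := G.adj (b + j)
      rwa [show b + j + 1 = b + (j+1) by ring] at this
    · -- wrap-around
      obtain ⟨j, hj⟩ : ∃ j, r = (T.k:ℤ) + j := ⟨r - T.k, by ring⟩
      have hj0 : 0 ≤ j := by omega
      rw [hj, mpts_eq2' h hj0 (by omega)]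
      have e2 : mpts T G a b ((T.k:ℤ) + j + 1) = G.pts (b + G.k) := by
        calc mpts T G a b ((T.k:ℤ) + j + 1) = mpts T G a b (0 + mK T G) := by
              rw [show (0:ℤ) + mK T G = (T.k:ℤ) + j + 1 by unfold mK; push_cast; omega]
          _ = mpts T G a b 0 := mpts_per T G a b 0
          _ = T.pts (a + 0) := mpts_eq1 T G a b le_rfl (by push_cast; omega)
          _ = G.pts b := by rw [add_zero, h]
          _ = G.pts (b + G.k) := (G.periodic b).symm
      rw [e2]
      have := G.adj (b + j)
      rwa [show b + j + 1 = b + (G.k:ℤ) by omega] at this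

variable {a b : ℤ} (h : T.pts a = G.pts b)

lemma merge_pts (i : ℤ) : (mergeAt T G a b h).pts i = mpts T G a b i := rfl

lemma merge_k : (mergeAt T G a b h).k = T.k + G.k := rfl

lemma merge_covers_subset : (mergeAt T G a b h).covers ⊆ T.covers ∪ G.covers := by
  rintro p ⟨i, rfl⟩
  rw [merge_pts, ← mpts_mod]
  unfold mpts
  split_ifs
  · exact Or.inl ⟨_, rfl⟩
  · exact Or.inr ⟨_, rfl⟩

/-- turn cost equality in the T part -/
lemma merge_cost_T {j : ℤ} (h1 : 1 ≤ j) (h2 : j ≤ (T.k:ℤ) - 1) :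
    (mergeAt T G a b h).turnCost j = T.turnCost (a + j) := by
  unfold GridCycle.turnCost
  rw [merge_pts, merge_pts, merge_pts,
    mpts_eq1' h (by omega) (by omega), mpts_eq1' h (by omega) (by omega),
    mpts_eq1' h (by omega) (by omega),
    show a + (j+1) = a + j + 1 by ring, show a + (j-1) = a + j - 1 by ring]

/-- turn cost equality in the G part -/
lemma merge_cost_G {j : ℤ} (h1 : 1 ≤ j) (h2 : j ≤ (G.k:ℤ) - 1) :
    (mergeAt T G a b h).turnCost ((T.k:ℤ) + j) = G.turnCost (b + j) := by
  unfold GridCycle.turnCost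
  rw [merge_pts, merge_pts, merge_pts,
    show (T.k:ℤ) + j + 1 = (T.k:ℤ) + (j+1) by ring,
    show (T.k:ℤ) + j - 1 = (T.k:ℤ) + (j-1) by ring,
    mpts_eq2' h (by omega) (by omega), mpts_eq2' h (by omega) (by omega),
    mpts_eq2' h (by omega) (by omega),
    show b + (j+1) = b + j + 1 by ring, show b + (j-1) = b + j - 1 by ring]

end Merge

end ThinAux
namespace ThinAux

section MergeMore

variable {T G : GridCycle} {a b : ℤ} (h : T.pts a = G.pts b)

lemma merge_cost_zero
    (hsT : T.pts (a+1) - T.pts a = T.pts a - T.pts (a-1))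
    (hsG : G.pts (b+1) - G.pts b = G.pts b - G.pts (b-1))
    (hne1 : T.pts (a+1) - T.pts a ≠ G.pts (b+1) - G.pts b)
    (hne2 : T.pts (a+1) - T.pts a ≠ -(G.pts (b+1) - G.pts b)) :
    (mergeAt T G a b h).turnCost 0 = 1 := by
  have hTk := T.two_le; have hGk := G.two_le
  have e1 : (mergeAt T G a b h).pts (0+1) = T.pts (a+1) := by
    rw [merge_pts, show (0:ℤ)+1 = 1 by ring, mpts_eq1' h (by omega) (by push_cast; omega)]
  have e0 : (mergeAt T G a b h).pts 0 = T.pts a := by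
    rw [merge_pts, mpts_eq1' h le_rfl (by push_cast; omega), add_zero]
  have em1 : (mergeAt T G a b h).pts (0-1) = G.pts (b-1) := by
    rw [merge_pts, show (0:ℤ)-1 = -1 by ring, ← mpts_per T G a b (-1),
      show (-1:ℤ) + mK T G = (T.k:ℤ) + ((G.k:ℤ) - 1) by unfold mK; push_cast; ring,
      mpts_eq2' h (by omega) (by omega),
      show b + ((G.k:ℤ) - 1) = (b-1) + G.k by ring, G.periodic]
  unfold GridCycle.turnCost
  rw [e1, e0, em1]
  have key : T.pts a - G.pts (b-1) = G.pts (b+1) - G.pts b := by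
    rw [h]; exact hsG.symm
  rw [key, if_neg hne1, if_neg hne2]

lemma merge_cost_mid
    (hsT : T.pts (a+1) - T.pts a = T.pts a - T.pts (a-1))
    (hne1 : T.pts (a+1) - T.pts a ≠ G.pts (b+1) - G.pts b)
    (hne2 : T.pts (a+1) - T.pts a ≠ -(G.pts (b+1) - G.pts b)) :
    (mergeAt T G a b h).turnCost ((T.k : ℕ) : ℤ) = 1 := by
  have hTk := T.two_le; have hGk := G.two_le
  have e1 : (mergeAt T G a b h).pts ((T.k:ℤ)+1) = G.pts (b+1) := by
    rw [merge_pts, mpts_eq2' h (by omega) (by push_cast; omega)]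
  have e0 : (mergeAt T G a b h).pts ((T.k:ℤ)) = G.pts b := by
    rw [merge_pts, show ((T.k:ℤ)) = (T.k:ℤ) + 0 by ring,
      mpts_eq2' h le_rfl (by push_cast; omega), add_zero]
  have em1 : (mergeAt T G a b h).pts ((T.k:ℤ)-1) = T.pts (a-1) := by
    rw [merge_pts, mpts_eq1' h (by omega) (by omega),
      show a + ((T.k:ℤ) - 1) = (a-1) + T.k by ring, T.periodic]
  unfold GridCycle.turnCost
  rw [e1, e0, em1]
  have key : G.pts b - T.pts (a-1) = T.pts (a+1) - T.pts a := by
    rw [← h]; exact hsT.symm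
  rw [key, if_neg (fun hh => hne1 hh.symm), if_neg (fun hh => hne2 (by rw [hh, neg_neg]))]

lemma merge_turns (hcTa : T.turnCost a = 0) (hcGb : G.turnCost b = 0)
    (hj0 : (mergeAt T G a b h).turnCost 0 = 1)
    (hjm : (mergeAt T G a b h).turnCost ((T.k : ℕ) : ℤ) = 1) :
    (mergeAt T G a b h).turns = T.turns + G.turns + 2 := by
  set M := mergeAt T G a b h with hM
  have hTk := T.two_le; have hGk := G.two_le
  obtain ⟨m, hm⟩ : ∃ m, T.k = m + 1 := ⟨T.k - 1, by omega⟩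
  obtain ⟨n, hn⟩ : ∃ n, G.k = n + 1 := ⟨G.k - 1, by omega⟩
  have h0 : M.turns = ∑ i ∈ Finset.range T.k, M.turnCost i
      + ∑ i ∈ Finset.range G.k, M.turnCost ((T.k + i : ℕ) : ℤ) := by
    show ∑ i ∈ Finset.range M.k, M.turnCost i = _
    have : M.k = T.k + G.k := rfl
    rw [this]
    exact sum_range_add' (fun i : ℕ => M.turnCost i) T.k G.k
  have hb1 : ∑ i ∈ Finset.range T.k, M.turnCost i = T.turns + 1 := by
    rw [hm, Finset.sum_range_succ' (fun i : ℕ => M.turnCost i) m]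
    have hc : ∀ i ∈ Finset.range m,
        M.turnCost (((i+1 : ℕ)) : ℤ) = T.turnCost (a + ((i+1:ℕ):ℤ)) := by
      intro i hi
      have hi' := Finset.mem_range.mp hi
      exact merge_cost_T h (by push_cast; omega) (by push_cast; omega)
    rw [Finset.sum_congr rfl hc]
    have ht : T.turns = ∑ i ∈ Finset.range T.k, T.turnCost (a + i) :=
      (sum_shift T.k (fun x => T.turnCost x) (turnCost_periodic T) a).symm
    rw [ht, hm, Finset.sum_range_succ' (fun i : ℕ => T.turnCost (a + i)) m]
    have hz : M.turnCost (((0:ℕ)) : ℤ) = 1 := by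
      rw [Nat.cast_zero]; exact hj0
    rw [hz]
    have hz2 : T.turnCost (a + ((0:ℕ):ℤ)) = 0 := by
      rw [Nat.cast_zero, add_zero]; exact hcTa
    rw [hz2]
  have hb2 : ∑ i ∈ Finset.range G.k, M.turnCost ((T.k + i : ℕ) : ℤ) = G.turns + 1 := by
    rw [hn, Finset.sum_range_succ' (fun i : ℕ => M.turnCost ((T.k + i : ℕ) : ℤ)) n]
    have hc : ∀ i ∈ Finset.range n,
        M.turnCost ((T.k + (i+1) : ℕ) : ℤ) = G.turnCost (b + ((i+1:ℕ):ℤ)) := by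
      intro i hi
      have hi' := Finset.mem_range.mp hi
      rw [show ((T.k + (i+1) : ℕ) : ℤ) = (T.k:ℤ) + ((i+1:ℕ):ℤ) by push_cast; ring]
      exact merge_cost_G h (by push_cast; omega) (by push_cast; omega)
    rw [Finset.sum_congr rfl hc]
    have hg : G.turns = ∑ i ∈ Finset.range G.k, G.turnCost (b + i) :=
      (sum_shift G.k (fun x => G.turnCost x) (turnCost_periodic G) b).symm
    rw [hg, hn, Finset.sum_range_succ' (fun i : ℕ => G.turnCost (b + i)) n]
    have hz : M.turnCost ((T.k + 0 : ℕ) : ℤ) = 1 := by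
      rw [show ((T.k + 0 : ℕ) : ℤ) = ((T.k:ℕ):ℤ) by push_cast; ring]
      exact hjm
    rw [hz]
    have hz2 : G.turnCost (b + ((0:ℕ):ℤ)) = 0 := by
      rw [Nat.cast_zero, add_zero]; exact hcGb
    rw [hz2]
  rw [h0, hb1, hb2]
  ring

lemma merge_uses (u v : Pixel) :
    uses (mergeAt T G a b h) u v = uses T u v + uses G u v := by
  have hTk := T.two_le; have hGk := G.two_le
  set M := mergeAt T G a b h with hM
  have e0 : uses M u v = ∑ i ∈ Finset.range (T.k + G.k),
      (if (M.pts (i:ℤ) = u ∧ M.pts ((i:ℤ)+1) = v) ∨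
        (M.pts (i:ℤ) = v ∧ M.pts ((i:ℤ)+1) = u) then 1 else 0) := by
    rw [uses, Finset.card_filter]
    rfl
  rw [e0, sum_range_add' _ T.k G.k]
  have hA : ∑ i ∈ Finset.range T.k,
      (if (M.pts (i:ℤ) = u ∧ M.pts ((i:ℤ)+1) = v) ∨
        (M.pts (i:ℤ) = v ∧ M.pts ((i:ℤ)+1) = u) then 1 else 0) = uses T u v := by
    have hstep : ∀ i ∈ Finset.range T.k,
        (if (M.pts (i:ℤ) = u ∧ M.pts ((i:ℤ)+1) = v) ∨
          (M.pts (i:ℤ) = v ∧ M.pts ((i:ℤ)+1) = u) then (1:ℕ) else 0)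
        = (if (T.pts (a+(i:ℤ)) = u ∧ T.pts ((a+(i:ℤ))+1) = v) ∨
            (T.pts (a+(i:ℤ)) = v ∧ T.pts ((a+(i:ℤ))+1) = u) then 1 else 0) := by
      intro i hi
      have hi' := Finset.mem_range.mp hi
      have hp1 : M.pts (i:ℤ) = T.pts (a + (i:ℤ)) := by
        rw [hM, merge_pts]; exact mpts_eq1' h (by omega) (by push_cast; omega)
      have hp2 : M.pts ((i:ℤ)+1) = T.pts ((a + (i:ℤ))+1) := by
        rw [hM, merge_pts, mpts_eq1' h (by omega) (by push_cast; omega)]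
        congr 1; ring
      simp only [hp1, hp2]
    rw [Finset.sum_congr rfl hstep]
    have hper : ∀ x : ℤ, (if (T.pts (x + (T.k:ℤ)) = u ∧ T.pts ((x + (T.k:ℤ))+1) = v) ∨
        (T.pts (x + (T.k:ℤ)) = v ∧ T.pts ((x + (T.k:ℤ))+1) = u) then (1:ℕ) else 0)
        = (if (T.pts x = u ∧ T.pts (x+1) = v) ∨
            (T.pts x = v ∧ T.pts (x+1) = u) then 1 else 0) := by
      intro x
      rw [T.periodic, show x + (T.k:ℤ) + 1 = (x+1) + T.k by ring, T.periodic]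
    have := sum_shift T.k (fun x : ℤ => if (T.pts x = u ∧ T.pts (x+1) = v) ∨
        (T.pts x = v ∧ T.pts (x+1) = u) then (1:ℕ) else 0) hper a
    rw [this, uses, Finset.card_filter]
  have hB : ∑ i ∈ Finset.range G.k,
      (if (M.pts ((T.k + i : ℕ):ℤ) = u ∧ M.pts (((T.k + i : ℕ):ℤ)+1) = v) ∨
        (M.pts ((T.k + i : ℕ):ℤ) = v ∧ M.pts (((T.k + i : ℕ):ℤ)+1) = u) then 1 else 0)
      = uses G u v := by
    have hstep : ∀ i ∈ Finset.range G.k,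
        (if (M.pts ((T.k + i : ℕ):ℤ) = u ∧ M.pts (((T.k + i : ℕ):ℤ)+1) = v) ∨
          (M.pts ((T.k + i : ℕ):ℤ) = v ∧ M.pts (((T.k + i : ℕ):ℤ)+1) = u) then (1:ℕ) else 0)
        = (if (G.pts (b+(i:ℤ)) = u ∧ G.pts ((b+(i:ℤ))+1) = v) ∨
            (G.pts (b+(i:ℤ)) = v ∧ G.pts ((b+(i:ℤ))+1) = u) then 1 else 0) := by
      intro i hi
      have hi' := Finset.mem_range.mp hi
      have hp1 : M.pts ((T.k + i : ℕ):ℤ) = G.pts (b + (i:ℤ)) := by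
        rw [hM, merge_pts, show ((T.k + i : ℕ):ℤ) = (T.k:ℤ) + (i:ℤ) by push_cast; ring]
        exact mpts_eq2' h (by omega) (by push_cast; omega)
      have hp2 : M.pts (((T.k + i : ℕ):ℤ)+1) = G.pts ((b + (i:ℤ))+1) := by
        rw [hM, merge_pts, show ((T.k + i : ℕ):ℤ)+1 = (T.k:ℤ) + ((i:ℤ)+1) by push_cast; ring,
          mpts_eq2' h (by omega) (by push_cast; omega)]
        congr 1; ring
      simp only [hp1, hp2]
    rw [Finset.sum_congr rfl hstep]
    have hper : ∀ x : ℤ, (if (G.pts (x + (G.k:ℤ)) = u ∧ G.pts ((x + (G.k:ℤ))+1) = v) ∨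
        (G.pts (x + (G.k:ℤ)) = v ∧ G.pts ((x + (G.k:ℤ))+1) = u) then (1:ℕ) else 0)
        = (if (G.pts x = u ∧ G.pts (x+1) = v) ∨
            (G.pts x = v ∧ G.pts (x+1) = u) then 1 else 0) := by
      intro x
      rw [G.periodic, show x + (G.k:ℤ) + 1 = (x+1) + G.k by ring, G.periodic]
    have := sum_shift G.k (fun x : ℤ => if (G.pts x = u ∧ G.pts (x+1) = v) ∨
        (G.pts x = v ∧ G.pts (x+1) = u) then (1:ℕ) else 0) hper b
    rw [this, uses, Finset.card_filter]
  rw [hA, hB]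

end MergeMore

end ThinAux
namespace ThinAux

lemma straight_of_cost_zero {C : GridCycle} {i : ℤ} (h : C.turnCost i = 0) :
    C.pts (i+1) - C.pts i = C.pts i - C.pts (i-1) := by
  unfold GridCycle.turnCost at h
  split_ifs at h with h1 h2
  · exact h1

lemma uses_pos_of_slot (C : GridCycle) (j : ℤ) {u v : Pixel}
    (hcase : (C.pts j = u ∧ C.pts (j+1) = v) ∨ (C.pts j = v ∧ C.pts (j+1) = u)) :
    0 < uses C u v := by
  obtain ⟨s, hsr, _, hsv⟩ := exists_slot' C j
  have h0 : C.pts (s:ℤ) = C.pts j := by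
    have := hsv 0; simpa using this
  have h1 : C.pts ((s:ℤ)+1) = C.pts (j+1) := hsv 1
  apply Finset.card_pos.mpr
  refine ⟨s, Finset.mem_filter.mpr ⟨hsr, ?_⟩⟩
  rw [h0, h1]
  exact hcase

lemma sumL_erase (f : GridCycle → ℕ) {l : List GridCycle} {γ : GridCycle} (hγ : γ ∈ l) :
    (l.map f).sum = f γ + ((l.erase γ).map f).sum := by
  have hperm : l.Perm (γ :: l.erase γ) := List.perm_cons_erase hγ
  have := (hperm.map f).sum_eq
  rw [this, List.map_cons, List.sum_cons]

lemma exists_boundary {P : Set Pixel} {p q : Pixel}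
    (h : Relation.ReflTransGen (fun a b => b ∈ P ∧ Adjacent a b) p q) (S : Set Pixel)
    (hp : p ∈ S) (hq : q ∉ S) : ∃ u v, u ∈ S ∧ v ∉ S ∧ v ∈ P ∧ Adjacent u v := by
  induction h with
  | refl => exact absurd hp hq
  | @tail b c _ h2 ih =>
    by_cases hb : b ∈ S
    · exact ⟨b, c, hb, hq, h2.1, h2.2⟩
    · exact ih hb

lemma edgeUses_cons (C : GridCycle) (l : List GridCycle) (u v : Pixel) :
    edgeUses (C :: l) u v = uses C u v + edgeUses l u v := by
  rw [edgeUses_eq, edgeUses_eq, List.map_cons, List.sum_cons]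

lemma occL_cons (C : GridCycle) (l : List GridCycle) (p : Pixel) :
    occL (C :: l) p = occ C p + occL l p := by
  rw [occL, occL, List.map_cons, List.sum_cons]

lemma coverTurns_cons (C : GridCycle) (l : List GridCycle) :
    coverTurns (C :: l) = C.turns + coverTurns l := by
  rw [coverTurns, coverTurns, List.map_cons, List.sum_cons]

lemma occL_pos_of_mem_covers {l : List GridCycle} {γ : GridCycle} (hγ : γ ∈ l) {p : Pixel}
    (hp : p ∈ γ.covers) : 0 < occL l p := by
  have h1 : 0 < occ γ p := (occ_pos_iff γ p).mpr hp
  have h2 : occ γ p ≤ occL l p := by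
    rw [occL]; exact single_le_sumL (fun D => occ D p) hγ
  omega

lemma tour_exists_aux {P : Set Pixel} (hfin : P.Finite) (hconn : ConnectedIn P)
    (heul : EulerianRegion P) :
    ∀ (n : ℕ) (R : List GridCycle) (T : GridCycle), R.length = n →
    T.covers ⊆ P → (∀ γ ∈ R, γ.covers ⊆ P) →
    (∀ u ∈ P, ∀ v ∈ P, Adjacent u v → edgeUses (T :: R) u v = 1) →
    (∀ γ ∈ R, ∀ i : ℤ, nbrCount P (γ.pts i) = 4 → γ.turnCost i = 0) →
    (∀ i : ℤ, nbrCount P (T.pts i) = 4 → (∃ γ ∈ R, T.pts i ∈ γ.covers) → T.turnCost i = 0) →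
    ∃ M : GridCycle, M.covers = P ∧ M.turns ≤ T.turns + coverTurns R + 2 * R.length := by
  intro n
  induction n using Nat.strong_induction_on with
  | _ n IH =>
  intro R T hlen hTP hRP hedge hR4 hT4
  by_cases hcov : T.covers = P
  · exact ⟨T, hcov, by omega⟩
  -- find a boundary edge
  have hne : ∃ q ∈ P, q ∉ T.covers := by
    by_contra hq; push_neg at hq
    exact hcov (Set.Subset.antisymm hTP hq)
  obtain ⟨q, hqP, hqnc⟩ := hne
  have hp0 : T.pts 0 ∈ T.covers := ⟨0, rfl⟩
  have hp0P : T.pts 0 ∈ P := hTP hp0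
  obtain ⟨u, v, huc, hvnc, hvP, huv⟩ :=
    exists_boundary (hconn _ hp0P q hqP) T.covers hp0 hqnc
  have huP : u ∈ P := hTP huc
  have hTuse : uses T u v = 0 := by
    by_contra hpos
    exact hvnc (covers_of_uses_pos (Nat.pos_of_ne_zero hpos)).2
  have h1 : edgeUses (T :: R) u v = 1 := hedge u huP v hvP huv
  rw [edgeUses_cons] at h1
  have hRuse : 0 < (R.map (fun γ => uses γ u v)).sum := by
    rw [edgeUses_eq] at h1; omega
  obtain ⟨γ, hγR, hγpos⟩ := exists_pos_of_sum_pos _ R hRuse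
  have huγ : u ∈ γ.covers := (covers_of_uses_pos hγpos).1
  -- u has degree 4, and occurrence counts are forced
  have hallsub : ∀ D ∈ (T :: R), D.covers ⊆ P := by
    intro D hD
    rcases List.mem_cons.mp hD with rfl | hD'
    · exact hTP
    · exact hRP D hD'
  have hsum := sum_edgeUses_eq hfin (T :: R) hallsub u
  have hNFsum : ∑ v' ∈ NF P hfin u, edgeUses (T :: R) u v' = nbrCount P u := by
    rw [Finset.sum_congr rfl (fun v' hv' =>
      hedge u huP v' (mem_NF.mp hv').1 (mem_NF.mp hv').2), nbrCount_eq hfin]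
    simp
  have hoccT : 0 < occ T u := (occ_pos_iff T u).mpr huc
  have hoccγpos : 0 < occ γ u := (occ_pos_iff γ u).mpr huγ
  have hocc_split : occL (T :: R) u = occ T u + occL R u := occL_cons T R u
  have hocc_erase : occL R u = occ γ u + occL (R.erase γ) u :=
    sumL_erase (fun D => occ D u) hγR
  have hnbr4 : nbrCount P u = 4 := by
    rcases heul u huP with h2 | h4
    · exfalso; omega
    · exact h4
  have hoccT1 : occ T u = 1 := by omega
  have hoccγ1 : occ γ u = 1 := by omega
  have hoccE0 : occL (R.erase γ) u = 0 := by omega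
  -- indices of u in T and γ
  obtain ⟨ia, hia⟩ := huc
  obtain ⟨ib, hib⟩ := huγ
  have hT4u : T.turnCost ia = 0 := by
    apply hT4 ia (by rw [hia]; exact hnbr4)
    exact ⟨γ, hγR, by rw [hia]; exact ⟨ib, hib⟩⟩
  have hγ4u : γ.turnCost ib = 0 := hR4 γ hγR ib (by rw [hib]; exact hnbr4)
  have hsT := straight_of_cost_zero hT4u
  have hsG := straight_of_cost_zero hγ4u
  -- the two straight passes are perpendicular
  have hedge_next : edgeUses (T :: R) u (T.pts (ia+1)) = 1 := by
    apply hedge u huP _ (hTP ⟨ia+1, rfl⟩)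
    rw [← hia]; exact T.adj ia
  have huse_both : ∀ w : Pixel, 0 < uses T u w → 0 < uses γ u w → False := by
    intro w hw1 hw2
    have hwP : w ∈ P := hTP (covers_of_uses_pos hw1).2
    have hadj : Adjacent u w := by
      obtain ⟨i, hi⟩ := Finset.card_pos.mp hw1
      rw [Finset.mem_filter] at hi
      rcases hi.2 with ⟨e1, e2⟩ | ⟨e1, e2⟩
      · rw [← e1, ← e2]; exact T.adj i
      · rw [← e1, ← e2]; exact adj_symm (T.adj i)
    have := hedge u huP w hwP hadj
    rw [edgeUses_cons] at this
    have h2 : uses γ u w ≤ (R.map (fun D => uses D u w)).sum :=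
      single_le_sumL (fun D => uses D u w) hγR
    rw [edgeUses_eq] at this
    omega
  have hne1 : T.pts (ia+1) - T.pts ia ≠ γ.pts (ib+1) - γ.pts ib := by
    intro heq
    apply huse_both (T.pts (ia+1))
    · exact uses_pos_of_slot T ia (Or.inl ⟨hia, rfl⟩)
    · apply uses_pos_of_slot γ ib (Or.inl ⟨hib, ?_⟩)
      have hxy : T.pts ia = γ.pts ib := hia.trans hib.symm
      rw [hxy] at heq
      exact (sub_left_inj.mp heq).symm
  have hne2 : T.pts (ia+1) - T.pts ia ≠ -(γ.pts (ib+1) - γ.pts ib) := by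
    intro heq
    apply huse_both (T.pts (ia+1))
    · exact uses_pos_of_slot T ia (Or.inl ⟨hia, rfl⟩)
    · apply uses_pos_of_slot γ (ib-1) (Or.inr ⟨?_, ?_⟩)
      · -- γ.pts (ib-1) = T.pts (ia+1)
        have h3 : γ.pts (ib-1) - γ.pts ib = -(γ.pts (ib+1) - γ.pts ib) := by
          rw [hsG]; ring
        have hxy : T.pts ia = γ.pts ib := hia.trans hib.symm
        rw [hxy, ← h3] at heq
        exact (sub_left_inj.mp heq).symm
      · rw [sub_add_cancel, hib]
  have hmeq : T.pts ia = γ.pts ib := by rw [hia, hib]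
  set M := mergeAt T γ ia ib hmeq with hMdef
  have hj0 := merge_cost_zero hmeq hsT hsG hne1 hne2
  have hjm := merge_cost_mid hmeq hsT hne1 hne2
  have hMturns : M.turns = T.turns + γ.turns + 2 := merge_turns hmeq hT4u hγ4u hj0 hjm
  -- new invariants
  have hMP : M.covers ⊆ P := by
    intro p hp
    rcases merge_covers_subset hmeq hp with h' | h'
    · exact hTP h'
    · exact hRP γ hγR h'
  have hRP' : ∀ δ ∈ R.erase γ, δ.covers ⊆ P :=
    fun δ hδ => hRP δ (List.mem_of_mem_erase hδ)
  have hedge' : ∀ u' ∈ P, ∀ v' ∈ P, Adjacent u' v' → edgeUses (M :: R.erase γ) u' v' = 1 := by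
    intro u' hu' v' hv' hadj
    rw [edgeUses_cons, hMdef, merge_uses hmeq]
    have hE := hedge u' hu' v' hv' hadj
    rw [edgeUses_cons, edgeUses_eq] at hE
    rw [edgeUses_eq]
    have hse := sumL_erase (fun D => uses D u' v') hγR
    omega
  have hR4' : ∀ δ ∈ R.erase γ, ∀ i : ℤ, nbrCount P (δ.pts i) = 4 → δ.turnCost i = 0 :=
    fun δ hδ => hR4 δ (List.mem_of_mem_erase hδ)
  have hT4' : ∀ i : ℤ, nbrCount P (M.pts i) = 4 →
      (∃ δ ∈ R.erase γ, M.pts i ∈ δ.covers) → M.turnCost i = 0 := by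
    intro i hdeg hex
    obtain ⟨s, hsr, _, hsv⟩ := exists_slot' M i
    have hcost : M.turnCost (s:ℤ) = M.turnCost i := GC.turnCost_congr M hsv
    have hpts : M.pts (s:ℤ) = M.pts i := by
      have := hsv 0; simpa using this
    rw [← hcost]
    rw [← hpts] at hdeg hex
    rw [Finset.mem_range] at hsr
    have hMk : M.k = T.k + γ.k := rfl
    have hTk := T.two_le
    have hγk := γ.two_le
    -- rule out the junction pixels
    have hnotu : M.pts (s:ℤ) ≠ u := by
      intro hequ
      obtain ⟨δ, hδ, hpδ⟩ := hex
      rw [hequ] at hpδ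
      have := occL_pos_of_mem_covers hδ hpδ
      omega
    rcases lt_or_ge (s:ℤ) ((T.k:ℤ)) with hcase | hcase
    · -- T part; s ≠ 0 would need... s = 0 gives pixel u
      have hs0 : (s:ℤ) ≠ 0 := by
        intro h0
        apply hnotu
        rw [hMdef, merge_pts, h0, mpts_eq1' hmeq le_rfl (by push_cast; omega), add_zero, hia]
      have hpe : M.pts (s:ℤ) = T.pts (ia + s) := by
        rw [hMdef, merge_pts]
        exact mpts_eq1' hmeq (by omega) (by omega)
      have hce : M.turnCost (s:ℤ) = T.turnCost (ia + s) :=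
        merge_cost_T hmeq (by omega) (by omega)
      rw [hce]
      apply hT4 (ia + s) (by rw [← hpe]; exact hdeg)
      obtain ⟨δ, hδ, hpδ⟩ := hex
      exact ⟨δ, List.mem_of_mem_erase hδ, by rw [← hpe]; exact hpδ⟩
    · -- γ part
      obtain ⟨j, hj⟩ : ∃ j : ℤ, (s:ℤ) = (T.k:ℤ) + j := ⟨(s:ℤ) - T.k, by ring⟩
      have hj0' : 0 ≤ j := by omega
      have hjlt : j < γ.k := by
        rw [hMk] at hsr
        push_cast at hsr
        omega
      have hsT' : (s:ℤ) ≠ (T.k:ℤ) := by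
        intro h0
        apply hnotu
        rw [hMdef, merge_pts, h0, show ((T.k:ℕ):ℤ) = (T.k:ℤ) + 0 by ring,
          mpts_eq2' hmeq le_rfl (by omega), add_zero, hib]
      have hj1 : 1 ≤ j := by omega
      have hpe : M.pts (s:ℤ) = γ.pts (ib + j) := by
        rw [hMdef, merge_pts, hj]
        exact mpts_eq2' hmeq (by omega) (by omega)
      have hce : M.turnCost (s:ℤ) = γ.turnCost (ib + j) := by
        rw [hj]
        exact merge_cost_G hmeq (by omega) (by omega)
      rw [hce]
      exact hR4 γ hγR (ib + j) (by rw [← hpe]; exact hdeg)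
  -- recurse
  have hlen' : (R.erase γ).length < n := by
    rw [← hlen]
    have := List.length_erase_of_mem hγR
    rw [this]
    have : 0 < R.length := List.length_pos_iff.mpr (List.ne_nil_of_mem hγR)
    omega
  obtain ⟨M', hM'cov, hM'le⟩ := IH (R.erase γ).length hlen' (R.erase γ) M rfl
    hMP hRP' hedge' hR4' hT4'
  refine ⟨M', hM'cov, ?_⟩
  have hct : coverTurns R = γ.turns + coverTurns (R.erase γ) :=
    sumL_erase GridCycle.turns hγR
  have hlen'' : R.length = (R.erase γ).length + 1 := by
    have := List.length_erase_of_mem hγR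
    have : 0 < R.length := List.length_pos_iff.mpr (List.ne_nil_of_mem hγR)
    omega
  rw [hlen''] at hlen ⊢
  omega

end ThinAux
namespace ThinAux

section Part2

variable {P : Set Pixel} {CC : List GridCycle}

def Own (CC : List GridCycle) (u v : Pixel) (γ : GridCycle) : Prop :=
  γ ∈ CC ∧ 0 < uses γ u v

lemma own_exists (hCC : IsCanonicalCycleCover P CC) {u v : Pixel} (hu : u ∈ P) (hv : v ∈ P)
    (hadj : Adjacent u v) : ∃ γ, Own CC u v γ := by
  have h1 := hCC.2.1 u hu v hv hadj
  rw [edgeUses_eq] at h1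
  obtain ⟨γ, hγ, hpos⟩ := exists_pos_of_sum_pos (fun C => uses C u v) CC (by omega)
  exact ⟨γ, hγ, hpos⟩

lemma own_unique (hCC : IsCanonicalCycleCover P CC) {u v : Pixel} (hu : u ∈ P) (hv : v ∈ P)
    (hadj : Adjacent u v) {γ γ' : GridCycle} (h1 : Own CC u v γ) (h2 : Own CC u v γ') :
    γ = γ' := by
  by_contra hne
  have hsum := two_mem_le_sumL (fun D => uses D u v) h1.1 h2.1 hne
  have hE := hCC.2.1 u hu v hv hadj
  rw [edgeUses_eq] at hE
  have hp1 := h1.2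
  have hp2 := h2.2
  omega

def Dev (P : Set Pixel) (C : GridCycle) (i : ℤ) : Prop :=
  (nbrCount P (C.pts i) = 4 ∧ ¬ (C.pts (i+1) - C.pts i = C.pts i - C.pts (i-1))) ∨
  (nbrCount P (C.pts i) = 2 ∧ C.pts (i+1) = C.pts (i-1))

lemma dev_congr {C : GridCycle} {i j : ℤ} (h : ∀ m : ℤ, C.pts (i + m) = C.pts (j + m)) :
    Dev P C i ↔ Dev P C j := by
  have h0 : C.pts i = C.pts j := by have := h 0; simpa using this
  have h1 : C.pts (i+1) = C.pts (j+1) := h 1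
  have hm : C.pts (i-1) = C.pts (j-1) := by
    have := h (-1); simpa [sub_eq_add_neg] using this
  unfold Dev
  rw [h0, h1, hm]

lemma cost_ge_base_dev (hfin : P.Finite) (heul : EulerianRegion P) {C : GridCycle}
    (hC : C.covers ⊆ P) (i : ℤ) :
    (if IsCorner P (C.pts i) then 1 else 0) + (if Dev P C i then 1 else 0) ≤ C.turnCost i := by
  have hpP : C.pts i ∈ P := hC ⟨i, rfl⟩
  rcases heul _ hpP with h2 | h4
  · by_cases hU : C.pts (i+1) = C.pts (i-1)
    · have hdev : Dev P C i := Or.inr ⟨h2, hU⟩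
      rw [cost_two_of_uturn hU, if_pos hdev]
      split_ifs <;> omega
    · have hdev : ¬ Dev P C i := by
        rintro (⟨h4', _⟩ | ⟨_, hU'⟩)
        · omega
        · exact hU hU'
      rw [if_neg hdev]
      by_cases hcor : IsCorner P (C.pts i)
      · rw [if_pos hcor, cost_one_of_corner hC hcor hU]
      · rw [if_neg hcor, cost_zero_of_noncorner hfin hC hpP h2 hcor hU]
  · have hcor : ¬ IsCorner P (C.pts i) := by
      intro hcor; have := hcor.2.1; omega
    rw [if_neg hcor]
    by_cases hs : C.pts (i+1) - C.pts i = C.pts i - C.pts (i-1)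
    · have hdev : ¬ Dev P C i := by
        rintro (⟨_, hns⟩ | ⟨h2', _⟩)
        · exact hns hs
        · omega
      rw [if_neg hdev]
      unfold GridCycle.turnCost
      rw [if_pos hs]
    · have hcost : 1 ≤ C.turnCost i := by
        unfold GridCycle.turnCost
        rw [if_neg hs]
        split_ifs <;> omega
      split_ifs <;> omega

lemma own_step (hfin : P.Finite) (heul : EulerianRegion P)
    (hCC : IsCanonicalCycleCover P CC) {C : GridCycle} (hC : C.covers ⊆ P) {i : ℤ}
    (hnd : ¬ Dev P C i) {γ : GridCycle}
    (hown : Own CC (C.pts (i-1)) (C.pts i) γ) : Own CC (C.pts i) (C.pts (i+1)) γ := by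
  have hpP : C.pts i ∈ P := hC ⟨i, rfl⟩
  have hpredP : C.pts (i-1) ∈ P := hC ⟨i-1, rfl⟩
  have hsuccP : C.pts (i+1) ∈ P := hC ⟨i+1, rfl⟩
  have hγCC := hown.1
  have hγsub : γ.covers ⊆ P := hCC.1.1 γ hγCC
  rcases heul _ hpP with h2 | h4
  · -- degree 2
    have hUne : C.pts (i+1) ≠ C.pts (i-1) := by
      intro hU; exact hnd (Or.inr ⟨h2, hU⟩)
    have hpγ : C.pts i ∈ γ.covers := (covers_of_uses_pos hown.2).2
    obtain ⟨iv, hiv⟩ := hpγ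
    have hg1 : γ.pts (iv+1) ∈ P := hγsub ⟨iv+1, rfl⟩
    have hg0 : γ.pts (iv-1) ∈ P := hγsub ⟨iv-1, rfl⟩
    have hgadj1 : Adjacent (C.pts i) (γ.pts (iv+1)) := by rw [← hiv]; exact γ.adj iv
    have hgadj0 : Adjacent (C.pts i) (γ.pts (iv-1)) := by rw [← hiv]; exact adj_pred γ iv
    have hgne : γ.pts (iv+1) ≠ γ.pts (iv-1) := canon_no_uturn hCC hγCC iv
    have hpair := nbr_pair hfin h2 hsuccP hpredP (C.adj i) (adj_pred C i) hUne
    rcases hpair (γ.pts (iv+1)) hg1 hgadj1 with hv1 | hv1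
    · -- forward continuation hits succ
      refine ⟨hγCC, uses_pos_of_slot γ iv (Or.inl ⟨hiv, hv1⟩)⟩
    · -- forward hits pred, so backward hits succ
      rcases hpair (γ.pts (iv-1)) hg0 hgadj0 with hv0 | hv0
      · refine ⟨hγCC, uses_pos_of_slot γ (iv-1) (Or.inr ⟨hv0, ?_⟩)⟩
        rw [sub_add_cancel, hiv]
      · exact absurd (hv1.trans hv0.symm) hgne
  · -- degree 4: both pass straight
    have hstr : C.pts (i+1) - C.pts i = C.pts i - C.pts (i-1) := by
      by_contra hns; exact hnd (Or.inl ⟨h4, hns⟩)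
    obtain ⟨m, hm⟩ := Finset.card_pos.mp hown.2
    rw [Finset.mem_filter] at hm
    rcases hm.2 with ⟨e1, e2⟩ | ⟨e1, e2⟩
    · -- γ.pts m = pred, γ.pts (m+1) = p : straight at m+1
      have hdeg : nbrCount P (γ.pts ((m:ℤ)+1)) = 4 := by rw [e2]; exact h4
      have hcost := hCC.2.2 γ hγCC ((m:ℤ)+1) hdeg
      have hstr2 := straight_of_cost_zero hcost
      rw [show (m:ℤ)+1-1 = (m:ℤ) by ring] at hstr2
      -- γ.pts (m+2) = succ
      have hval : γ.pts ((m:ℤ)+1+1) = C.pts (i+1) := by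
        have h5 : γ.pts ((m:ℤ)+1+1) - γ.pts ((m:ℤ)+1) = C.pts (i+1) - C.pts i := by
          rw [hstr2, e1, e2, hstr]
        rw [e2] at h5
        exact sub_left_inj.mp h5
      exact ⟨hγCC, uses_pos_of_slot γ ((m:ℤ)+1) (Or.inl ⟨e2, hval⟩)⟩
    · -- γ.pts m = p, γ.pts (m+1) = pred : straight at m
      have hdeg : nbrCount P (γ.pts (m:ℤ)) = 4 := by rw [e1]; exact h4
      have hcost := hCC.2.2 γ hγCC (m:ℤ) hdeg
      have hstr2 := straight_of_cost_zero hcost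
      have hval : γ.pts ((m:ℤ)-1) = C.pts (i+1) := by
      -- pred - p = p - γ.pts(m-1) and succ - p = p - pred
        have h5 : C.pts (i-1) - C.pts i = C.pts i - γ.pts ((m:ℤ)-1) := by
          rw [← e1, ← e2]; exact hstr2
        have h6 : C.pts i - γ.pts ((m:ℤ)-1) = C.pts i - C.pts (i+1) := by
          rw [← h5]
          have : C.pts (i+1) - C.pts i = -(C.pts (i-1) - C.pts i) := by rw [hstr]; ring
          have h7 : C.pts i - C.pts (i+1) = -(C.pts (i+1) - C.pts i) := by ring
          rw [h7, this]; ring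
        exact sub_right_inj.mp h6
      refine ⟨hγCC, uses_pos_of_slot γ ((m:ℤ)-1) (Or.inr ⟨hval, ?_⟩)⟩
      rw [sub_add_cancel, e1]

lemma own_run (hfin : P.Finite) (heul : EulerianRegion P)
    (hCC : IsCanonicalCycleCover P CC) {C : GridCycle} (hC : C.covers ⊆ P) :
    ∀ (r : ℕ) (a : ℤ), (∀ s : ℕ, s < r → ¬ Dev P C (a + s)) →
    ∀ γ, Own CC (C.pts (a-1)) (C.pts a) γ →
    Own CC (C.pts (a + r - 1)) (C.pts (a + r)) γ := by
  intro r
  induction r with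
  | zero => intro a _ γ hown; simpa using hown
  | succ r ih =>
    intro a hnd γ hown
    have h1 := ih a (fun s hs => hnd s (by omega)) γ hown
    have h2 := own_step hfin heul hCC hC (i := a + r) (hnd r (by omega)) h1
    have e1 : a + ((r:ℕ)+1:ℕ) = a + (r:ℤ) + 1 := by push_cast; ring
    have e2 : a + ((r:ℕ)+1:ℕ) - 1 = a + (r:ℤ) := by push_cast; ring
    rw [e2, e1]
    exact h2

lemma own_of_corner (hfin : P.Finite) (hCC : IsCanonicalCycleCover P CC) {p : Pixel}
    (hcor : IsCorner P p) {γ : GridCycle} (hγ : γ ∈ CC) (hpγ : p ∈ γ.covers)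
    {δ : GridCycle} (hδ : δ ∈ CC) (hpδ : p ∈ δ.covers) : δ = γ := by
  by_contra hne
  have h1 : 0 < occ γ p := (occ_pos_iff γ p).mpr hpγ
  have h2 : 0 < occ δ p := (occ_pos_iff δ p).mpr hpδ
  have h3 := two_mem_le_sumL (fun D => occ D p) hδ hγ hne
  have h4 := canon_corner_occL hfin hCC hcor
  rw [occL] at h4
  omega

lemma cycle_has_corner (hfin : P.Finite) (heul : EulerianRegion P)
    (hCC : IsCanonicalCycleCover P CC) {γ : GridCycle} (hγ : γ ∈ CC) :
    ∃ p, IsCorner P p ∧ p ∈ γ.covers := by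
  have h4 := turns_ge_four γ
  have hpos : 0 < γ.turns := by omega
  have : ∃ i ∈ Finset.range γ.k, γ.turnCost (i:ℤ) ≠ 0 := by
    by_contra hno
    push_neg at hno
    have : γ.turns = 0 := Finset.sum_eq_zero hno
    omega
  obtain ⟨i, _, hi⟩ := this
  have := canon_cost hfin heul hCC hγ (i:ℤ)
  by_cases hcor : IsCorner P (γ.pts (i:ℤ))
  · exact ⟨γ.pts (i:ℤ), hcor, ⟨(i:ℤ), rfl⟩⟩
  · rw [if_neg hcor] at this
    exact absurd this hi

lemma sublist_sum_le : ∀ {l₁ l₂ : List ℕ}, l₁.Sublist l₂ → l₁.sum ≤ l₂.sum := by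
  intro l₁ l₂ h
  induction h with
  | slnil => simp
  | cons a _ ih =>
    rw [List.sum_cons]
    omega
  | cons_cons a _ ih =>
    rw [List.sum_cons, List.sum_cons]
    omega

lemma nodup_of_canonical (hfin : P.Finite) (heul : EulerianRegion P)
    (hCC : IsCanonicalCycleCover P CC) : CC.Nodup := by
  by_contra hnd
  obtain ⟨γ, hdup⟩ := List.exists_duplicate_iff_not_nodup.mpr hnd
  have hsub : List.Sublist [γ, γ] CC := List.duplicate_iff_sublist.mp hdup
  have hγ : γ ∈ CC := hdup.mem
  obtain ⟨p, hcor, hpγ⟩ := cycle_has_corner hfin heul hCC hγ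
  have h1 : 0 < occ γ p := (occ_pos_iff γ p).mpr hpγ
  have hmapsub : List.Sublist [occ γ p, occ γ p] (CC.map (fun D => occ D p)) := by
    have := hsub.map (fun D => occ D p)
    simpa using this
  have hsum : occ γ p + occ γ p ≤ (CC.map (fun D => occ D p)).sum := by
    have h2 := sublist_sum_le hmapsub
    simpa using h2
  have h4 := canon_corner_occL hfin hCC hcor
  rw [occL] at h4
  omega

end Part2

end ThinAux
namespace ThinAux

section Count

variable {P : Set Pixel} {CC : List GridCycle}

lemma own_at_corner (hfin : P.Finite) (hCC : IsCanonicalCycleCover P CC)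
    {C : GridCycle} (hC : C.covers = P) {γ : GridCycle} (hγ : γ ∈ CC)
    {p : Pixel} (hcor : IsCorner P p) (hpγ : p ∈ γ.covers)
    {s : ℤ} (hs : C.pts s = p) : Own CC (C.pts (s-1)) (C.pts s) γ := by
  have hp1 : C.pts (s-1) ∈ P := by rw [← hC]; exact ⟨s-1, rfl⟩
  have hp2 : C.pts s ∈ P := by rw [← hC]; exact ⟨s, rfl⟩
  have hadj : Adjacent (C.pts (s-1)) (C.pts s) := adj_symm (adj_pred C s)
  obtain ⟨δ, hδ⟩ := own_exists hCC hp1 hp2 hadj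
  have hpδ : p ∈ δ.covers := by rw [← hs]; exact (covers_of_uses_pos hδ.2).2
  have heq := own_of_corner hfin hCC hcor hγ hpγ hδ.1 hpδ
  rwa [heq] at hδ

lemma dev_shift {C : GridCycle} (i : ℤ) (n : ℤ) : Dev P C (i + n * C.k) ↔ Dev P C i :=
  dev_congr (fun m => by
    rw [show i + n * (C.k:ℤ) + m = (i+m) + n * C.k by ring, GC.pts_add_mul])

lemma dev_exists {C : GridCycle} {δ0 : ℕ} (hδ0 : Dev P C (δ0:ℤ)) (s : ℤ) :
    ∃ r : ℕ, Dev P C (s + r) := by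
  have hk : 0 < (C.k:ℤ) := GC.k_pos C
  set n : ℤ := max (s - δ0) 0 with hn
  have hn0 : 0 ≤ n := le_max_right _ _
  have hnk : n ≤ n * C.k := le_mul_of_one_le_right hn0 (by omega)
  have hle : s ≤ (δ0:ℤ) + n * C.k := by
    have h1 : s - δ0 ≤ n := le_max_left _ _
    omega
  refine ⟨((δ0:ℤ) + n * C.k - s).toNat, ?_⟩
  have he : s + (((δ0:ℤ) + n * C.k - s).toNat : ℤ) = (δ0:ℤ) + n * C.k := by omega
  rw [he]
  exact (dev_shift (δ0:ℤ) n).mpr hδ0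

lemma two_distinct {L : List GridCycle} (hL : 2 ≤ L.length) (hnd : L.Nodup) :
    ∃ a b, a ∈ L ∧ b ∈ L ∧ a ≠ b := by
  match L, hL with
  | a :: b :: l, _ =>
    refine ⟨a, b, by simp, by simp, ?_⟩
    intro h
    rw [List.nodup_cons] at hnd
    exact hnd.1 (by rw [h]; exact List.mem_cons_self)

lemma count_devs (hfin : P.Finite) (heul : EulerianRegion P)
    (hCC : IsCanonicalCycleCover P CC) {C : GridCycle} (hC : IsTour P C)
    (hc2 : 2 ≤ CC.length) :
    CC.length ≤ ((Finset.range C.k).filter (fun i : ℕ => Dev P C (i:ℤ))).card := by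
  have hCeq : C.covers = P := hC
  have hCsub : C.covers ⊆ P := le_of_eq hCeq
  have hnodup := nodup_of_canonical hfin heul hCC
  have hDne : ∃ δ0 : ℕ, δ0 ∈ Finset.range C.k ∧ Dev P C (δ0:ℤ) := by
    by_contra hno
    push_neg at hno
    have hnoZ : ∀ i : ℤ, ¬ Dev P C i := by
      intro i hdev
      obtain ⟨s, hsr, _, hsv⟩ := exists_slot' C i
      exact hno s hsr ((dev_congr hsv).mpr hdev)
    obtain ⟨γ1, γ2, hγ1, hγ2, hne12⟩ := two_distinct hc2 hnodup
    obtain ⟨p1, hcor1, hp1γ⟩ := cycle_has_corner hfin heul hCC hγ1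
    obtain ⟨p2, hcor2, hp2γ⟩ := cycle_has_corner hfin heul hCC hγ2
    obtain ⟨s1, hs1⟩ : ∃ s : ℤ, C.pts s = p1 := by
      have := hcor1.1; rw [← hCeq] at this; exact this
    obtain ⟨s2, hs2⟩ : ∃ s : ℤ, C.pts s = p2 := by
      have := hcor2.1; rw [← hCeq] at this; exact this
    have key : ∀ (a b : ℤ) (γa γb : GridCycle), a ≤ b →
        Own CC (C.pts (a-1)) (C.pts a) γa → Own CC (C.pts (b-1)) (C.pts b) γb →
        γa = γb := by
      intro a b γa γb hab howna hownb
      have hr := own_run hfin heul hCC hCsub (b - a).toNat a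
        (fun s _ => hnoZ (a + s)) γa howna
      have he : a + (((b - a).toNat : ℤ)) = b := by omega
      rw [he] at hr
      have hp1' : C.pts (b-1) ∈ P := by rw [← hCeq]; exact ⟨b-1, rfl⟩
      have hp2' : C.pts b ∈ P := by rw [← hCeq]; exact ⟨b, rfl⟩
      exact own_unique hCC hp1' hp2' (adj_symm (adj_pred C b)) hr hownb
    have howns1 := own_at_corner hfin hCC hCeq hγ1 hcor1 hp1γ hs1
    have howns2 := own_at_corner hfin hCC hCeq hγ2 hcor2 hp2γ hs2
    rcases le_total s1 s2 with hle | hle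
    · exact hne12 (key s1 s2 γ1 γ2 hle howns1 howns2)
    · exact hne12 (key s2 s1 γ2 γ1 hle howns2 howns1).symm
  obtain ⟨δ0, hδ0r, hδ0d⟩ := hDne
  have hmain : ∀ γ : GridCycle, ∃ δ : ℕ, γ ∈ CC →
      δ ∈ (Finset.range C.k).filter (fun i : ℕ => Dev P C (i:ℤ)) ∧
      Own CC (C.pts ((δ:ℤ)-1)) (C.pts (δ:ℤ)) γ := by
    intro γ
    by_cases hγ : γ ∈ CC
    · obtain ⟨p, hcor, hpγ⟩ := cycle_has_corner hfin heul hCC hγ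
      obtain ⟨s, hs⟩ : ∃ s : ℤ, C.pts s = p := by
        have := hcor.1; rw [← hCeq] at this; exact this
      have hds := dev_exists hδ0d s
      have hr : Dev P C (s + (Nat.find hds : ℕ)) := Nat.find_spec hds
      have hrmin : ∀ r' : ℕ, r' < Nat.find hds → ¬ Dev P C (s + r') :=
        fun r' h => Nat.find_min hds h
      have hrun := own_run hfin heul hCC hCsub (Nat.find hds) s hrmin γ
        (own_at_corner hfin hCC hCeq hγ hcor hpγ hs)
      obtain ⟨δ, hδr, _, hδv⟩ := exists_slot' C (s + (Nat.find hds : ℕ))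
      have hpts0 : C.pts (δ:ℤ) = C.pts (s + (Nat.find hds : ℕ)) := by
        have := hδv 0; simpa using this
      have hptsm : C.pts ((δ:ℤ)-1) = C.pts (s + (Nat.find hds : ℕ) - 1) := by
        have := hδv (-1)
        simpa [sub_eq_add_neg] using this
      refine ⟨δ, fun _ => ⟨Finset.mem_filter.mpr ⟨hδr, (dev_congr hδv).mpr hr⟩, ?_⟩⟩
      rw [hpts0, hptsm]
      exact hrun
    · exact ⟨0, fun h => absurd h hγ⟩
  choose f hf using hmain
  have hcard : CC.length = CC.toFinset.card := (List.toFinset_card_of_nodup hnodup).symm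
  rw [hcard]
  apply Finset.card_le_card_of_injOn f
  · intro γ hγ
    exact (hf γ (List.mem_toFinset.mp hγ)).1
  · intro γ hγ γ' hγ' heqf
    have h1 := (hf γ (List.mem_toFinset.mp hγ)).2
    have h2 := (hf γ' (List.mem_toFinset.mp hγ')).2
    rw [heqf] at h1
    have hp1' : C.pts ((f γ' : ℤ)-1) ∈ P := by rw [← hCeq]; exact ⟨_, rfl⟩
    have hp2' : C.pts ((f γ' : ℤ)) ∈ P := by rw [← hCeq]; exact ⟨_, rfl⟩
    exact own_unique hCC hp1' hp2' (adj_symm (adj_pred C _)) h1 h2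

lemma four_len_le (l : List GridCycle) : 4 * l.length ≤ coverTurns l := by
  induction l with
  | nil => simp [coverTurns]
  | cons a l ih =>
    rw [coverTurns_cons, List.length_cons]
    have := turns_ge_four a
    omega

lemma tour_lower (hfin : P.Finite) (heul : EulerianRegion P)
    (hCC : IsCanonicalCycleCover P CC) {C : GridCycle} (hC : IsTour P C)
    (hc2 : 2 ≤ CC.length) :
    coverTurns CC + CC.length ≤ C.turns := by
  have hCeq : C.covers = P := hC
  have hCsub : C.covers ⊆ P := le_of_eq hCeq
  have hsplit : ∑ i ∈ Finset.range C.k, (if IsCorner P (C.pts i) then 1 else 0)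
      + ∑ i ∈ Finset.range C.k, (if Dev P C (i:ℤ) then 1 else 0) ≤ C.turns := by
    rw [← Finset.sum_add_distrib]
    exact Finset.sum_le_sum (fun i _ => cost_ge_base_dev hfin heul hCsub (i:ℤ))
  have hbase : (cornersF P hfin).card
      ≤ ∑ i ∈ Finset.range C.k, (if IsCorner P (C.pts i) then 1 else 0) := by
    rw [← Finset.card_filter]
    apply Finset.card_le_card_of_surjOn (fun i : ℕ => C.pts i)
    intro p hp
    have hcor : IsCorner P p := mem_cornersF.mp hp
    have hpP : p ∈ P := hcor.1
    rw [← hCeq] at hpP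
    obtain ⟨j, hj⟩ := hpP
    obtain ⟨sl, hslr, _, hslv⟩ := exists_slot' C j
    have hval : C.pts (sl:ℤ) = p := by
      have := hslv 0
      simp only [add_zero] at this
      rw [this, hj]
    refine ⟨sl, ?_, hval⟩
    simp only [Finset.coe_filter, Set.mem_setOf_eq]
    exact ⟨Finset.mem_range.mp hslr |> Finset.mem_range.mpr, hval ▸ hcor⟩
  have hdev : ((Finset.range C.k).filter (fun i : ℕ => Dev P C (i:ℤ))).card
      = ∑ i ∈ Finset.range C.k, (if Dev P C (i:ℤ) then 1 else 0) :=
    Finset.card_filter _ _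
  have hcount := count_devs hfin heul hCC hC hc2
  have ht := canon_coverTurns hfin heul hCC
  omega

end Count

end ThinAux
/-- Thin Eulerian milling: let `P` be a thin Eulerian region and `CC` its
canonical cycle cover, with `t` turns and `c` cycles. Then `CC` is a
minimum-turn cycle cover of `P`; if `c ≥ 2` then every tour of `P` has at
least `t + c` turns; and `P` admits a tour with at most `t + 2(c − 1)` turns,
which (since `t ≥ 4c`) has at most `6/5` times the minimum number of turns of
a tour of `P`. -/
theorem thin_eulerian_six_fifths (P : Set Pixel) (hP : IsRegion P)
    (hthin : ThinRegion P) (heul : EulerianRegion P)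
    (CC : List GridCycle) (hCC : IsCanonicalCycleCover P CC) :
    (∀ CC' : List GridCycle, IsCycleCover P CC' → coverTurns CC ≤ coverTurns CC') ∧
    (2 ≤ CC.length → ∀ C : GridCycle, IsTour P C →
      coverTurns CC + CC.length ≤ C.turns) ∧
    (4 * CC.length ≤ coverTurns CC) ∧
    ∃ C : GridCycle, IsTour P C ∧
      C.turns ≤ coverTurns CC + 2 * (CC.length - 1) ∧
      ∀ C' : GridCycle, IsTour P C' → 5 * C.turns ≤ 6 * C'.turns := by
  classical
  obtain ⟨hfin, hNE, hconn⟩ := hP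
  have hsub := hCC.1.1
  have ht := ThinAux.canon_coverTurns hfin heul hCC
  have hpart1 : ∀ CC' : List GridCycle, IsCycleCover P CC' →
      coverTurns CC ≤ coverTurns CC' := by
    intro CC' hCC'
    rw [ht]
    apply ThinAux.cover_lower_aux hfin CC' hCC'.1 (ThinAux.cornersF P hfin)
    · intro p hp; exact ThinAux.mem_cornersF.mp hp
    · intro p hp; exact hCC'.2 p (ThinAux.mem_cornersF.mp hp).1
  have hmin : ∀ C' : GridCycle, IsTour P C' → coverTurns CC ≤ C'.turns := by
    intro C' htour'
    have hcov : IsCycleCover P [C'] := by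
      constructor
      · intro D hD
        rw [List.mem_singleton] at hD
        subst hD
        exact le_of_eq htour'
      · intro p hp
        exact ⟨C', List.mem_singleton_self C', by rw [htour']; exact hp⟩
    have := hpart1 [C'] hcov
    simpa [coverTurns] using this
  refine ⟨hpart1, ?_, ThinAux.four_len_le CC, ?_⟩
  · intro hc2 C htour
    exact ThinAux.tour_lower hfin heul hCC htour hc2
  · obtain ⟨p0, hp0⟩ := hNE
    obtain ⟨C0', hC0'CC, _⟩ := hCC.1.2 p0 hp0
    cases CC with
    | nil => exact absurd hC0'CC List.not_mem_nil
    | cons C0 R =>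
      obtain ⟨M, hMcov, hMle⟩ := ThinAux.tour_exists_aux hfin hconn heul R.length R C0 rfl
        (hsub C0 List.mem_cons_self) (fun γ hγ => hsub γ (List.mem_cons_of_mem _ hγ))
        hCC.2.1 (fun γ hγ => hCC.2.2 γ (List.mem_cons_of_mem _ hγ))
        (fun i h4 _ => hCC.2.2 C0 List.mem_cons_self i h4)
      have e1 : coverTurns (C0 :: R) = C0.turns + coverTurns R :=
        ThinAux.coverTurns_cons C0 R
      have e2 : (C0 :: R).length = R.length + 1 := rfl
      refine ⟨M, hMcov, by omega, ?_⟩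
      intro C' htour'
      have hlow := hmin C' htour'
      by_cases hc2 : 2 ≤ (C0 :: R).length
      · have hlow2 := ThinAux.tour_lower hfin heul hCC htour' hc2
        have h4c := ThinAux.four_len_le (C0 :: R)
        omega
      · have hR0 : R.length = 0 := by
          rw [e2] at hc2; omega
        have hR0' : coverTurns R = 0 := by
          cases R with
          | nil => simp [coverTurns]
          | cons a l => simp at hR0
        omega
end
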